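/- arXiv:1502.00056 — 7 statements merged into one kernel-verified Lean document; each statement's English description precedes it below -/
import Mathlib

section
/- For every n ≥ 1, R_n(1/2/3) equals the set of restricted growth functions of length n all of whose letters are 1 or 2. -/
/-!
In an RGF a value `m ≥ 2` can only appear after `m - 1` has appeared, so a letter `≥ 3` is
preceded by a `2`, itself preceded by the initial `1`: this is an occurrence of `1/2/3`.
Conversely, an occurrence of `1/2/3` consists of three pairwise distinct letters, which a word
over `{1, 2}` does not have.
-/

open Finset

/-- `IsRGF w` : `w = a₁⋯aₙ` is a restricted growth function: all letters are
positive, the first letter is `1` and each later letter is at most one more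
than the maximum of the preceding prefix. -/
def IsRGF (w : List ℕ) : Prop :=
  (∀ a ∈ w, 1 ≤ a) ∧
  (0 < w.length → w.getD 0 0 = 1) ∧
  (∀ j : ℕ, j + 1 < w.length →
    w.getD (j + 1) 0 ≤ 1 + (w.take (j + 1)).foldr max 0)

/-- The set partition encoded by the word `w` contains the set-partition
pattern encoded by the word `p`:  there are positions, listed increasingly,
whose "same block" (= same letter) pattern in `w` is exactly that of `p`. -/
def ContainsPat (w p : List ℕ) : Prop :=
  ∃ f : Fin p.length → Fin w.length, StrictMono f ∧
    ∀ a b : Fin p.length, (w.get (f a) = w.get (f b) ↔ p.get a = p.get b)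

/-- `Rn n p` : the restricted growth functions of length `n` whose associated
set partition avoids the pattern (of set partitions) encoded by the RGF `p`.
Via the standard bijection `σ ↦ w(σ)` this is `R_n(π) ≅ Π_n(π)`.
Patterns of `[3]`:  `1/2/3 ↦ [1,2,3]`, `1/23 ↦ [1,2,2]`, `13/2 ↦ [1,2,1]`,
`12/3 ↦ [1,1,2]`, `123 ↦ [1,1,1]`. -/
def Rn (n : ℕ) (p : List ℕ) : Set (List ℕ) :=
  {w | w.length = n ∧ IsRGF w ∧ ¬ ContainsPat w p}

/-- `lb` : sum over positions `j` of the number of distinct values occurring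
before position `j` that are bigger than the letter at `j`. -/
def statLB (w : List ℕ) : ℕ :=
  ∑ j ∈ Finset.range w.length,
    ((w.take j).toFinset.filter (fun v => w.getD j 0 < v)).card

/-- `ls` : left and smaller. -/
def statLS (w : List ℕ) : ℕ :=
  ∑ j ∈ Finset.range w.length,
    ((w.take j).toFinset.filter (fun v => v < w.getD j 0)).card

/-- `rb` : right and bigger. -/
def statRB (w : List ℕ) : ℕ :=
  ∑ j ∈ Finset.range w.length,
    ((w.drop (j + 1)).toFinset.filter (fun v => w.getD j 0 < v)).card

/-- `rs` : right and smaller. -/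
def statRS (w : List ℕ) : ℕ :=
  ∑ j ∈ Finset.range w.length,
    ((w.drop (j + 1)).toFinset.filter (fun v => v < w.getD j 0)).card

/-- The four–variable generating function
`F_n(π;q,r,s,t) = ∑_{σ∈Π_n(π)} q^{lb} r^{ls} s^{rb} t^{rs}`, with
`q = X 0`, `r = X 1`, `s = X 2`, `t = X 3`. -/
noncomputable def Fgen (n : ℕ) (p : List ℕ) : MvPolynomial (Fin 4) ℤ :=
  ∑ᶠ w ∈ Rn n p,
    (MvPolynomial.X 0 : MvPolynomial (Fin 4) ℤ) ^ statLB w *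
      MvPolynomial.X 1 ^ statLS w *
      MvPolynomial.X 2 ^ statRB w *
      MvPolynomial.X 3 ^ statRS w

/-- `LB_n(π;q)`. -/
noncomputable def LBp (n : ℕ) (p : List ℕ) : Polynomial ℤ :=
  ∑ᶠ w ∈ Rn n p, Polynomial.X ^ statLB w

/-- `LS_n(π;q)`. -/
noncomputable def LSp (n : ℕ) (p : List ℕ) : Polynomial ℤ :=
  ∑ᶠ w ∈ Rn n p, Polynomial.X ^ statLS w

/-- `RB_n(π;q)`. -/
noncomputable def RBp (n : ℕ) (p : List ℕ) : Polynomial ℤ :=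
  ∑ᶠ w ∈ Rn n p, Polynomial.X ^ statRB w

/-- `RS_n(π;q)`. -/
noncomputable def RSp (n : ℕ) (p : List ℕ) : Polynomial ℤ :=
  ∑ᶠ w ∈ Rn n p, Polynomial.X ^ statRS w

lemma List.foldr_max_zero_mem {l : List ℕ} (h : 0 < l.foldr max 0) : l.foldr max 0 ∈ l := by
  have hne : l ≠ [] := by rintro rfl; simp at h
  exact List.maximum_mem (List.foldr_max_of_ne_nil hne).symm

namespace IsRGF

variable {w : List ℕ}

lemma getElem_zero (hw : IsRGF w) (h : 0 < w.length) : w[0] = 1 := by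
  have h0 := hw.2.1 h
  rwa [List.getD_eq_getElem w 0 h] at h0

lemma exists_getElem_eq_of_le (hw : IsRGF w) :
    ∀ k (hk : k < w.length) m, 1 ≤ m → m ≤ w[k] → ∃ i, ∃ hi : i < w.length, i ≤ k ∧ w[i] = m := by
  intro k
  induction k using Nat.strong_induction_on with
  | _ k ih =>
    intro hk m hm1 hmk
    rcases hmk.eq_or_lt with heq | hlt
    · exact ⟨k, hk, le_rfl, heq.symm⟩
    cases k with
    | zero => have := hw.getElem_zero hk; omega
    | succ j =>
      have hgrowth := hw.2.2 j hk
      rw [List.getD_eq_getElem w 0 hk] at hgrowth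
      obtain ⟨i, hi, hival⟩ :=
        List.getElem_of_mem (List.foldr_max_zero_mem (l := w.take (j + 1)) (by omega))
      simp only [List.length_take, List.getElem_take] at hi hival
      obtain ⟨i', hi', hi'i, hval⟩ := ih i (by omega) (by omega) m hm1 (by omega)
      exact ⟨i', hi', by omega, hval⟩

end IsRGF

lemma containsPat_one_two_three_iff {w : List ℕ} :
    ContainsPat w [1, 2, 3] ↔ ∃ (i j k : ℕ) (_ : i < j) (_ : j < k) (_ : k < w.length),
      w[i] ≠ w[j] ∧ w[i] ≠ w[k] ∧ w[j] ≠ w[k] := by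
  constructor
  · rintro ⟨f, hmono, hpat⟩
    have hne (a b : Fin 3) (hab : a ≠ b) : w[(f a : ℕ)] ≠ w[(f b : ℕ)] := fun h => by
      have := (hpat a b).mp h
      fin_cases a <;> fin_cases b <;> simp_all
    refine ⟨f 0, f 1, f 2, hmono (by decide), hmono (by decide), (f 2).isLt,
      hne 0 1 (by decide), hne 0 2 (by decide), hne 1 2 (by decide)⟩
  · rintro ⟨i, j, k, hij, hjk, hk, hne⟩
    refine ⟨![⟨i, by omega⟩, ⟨j, by omega⟩, ⟨k, hk⟩], ?_, ?_⟩
    · refine Fin.strictMono_iff_lt_succ.mpr fun a => ?_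
      fin_cases a <;> simpa [Fin.lt_def]
    · intro a b
      fin_cases a <;> fin_cases b <;> simp [hne, hne.1.symm, hne.2.1.symm, hne.2.2.symm]

lemma IsRGF.containsPat_one_two_three_of_mem {w : List ℕ} (hw : IsRGF w) {a : ℕ}
    (ha : a ∈ w) (ha3 : 3 ≤ a) : ContainsPat w [1, 2, 3] := by
  obtain ⟨k, hk, rfl⟩ := List.getElem_of_mem ha
  obtain ⟨j, hj, hjk, hj2⟩ := hw.exists_getElem_eq_of_le k hk 2 (by omega) (by omega)
  have hw0 := hw.getElem_zero (by omega)
  have h0j : 0 < j := Nat.pos_of_ne_zero fun h => by subst h; omega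
  have hjk : j < k := lt_of_le_of_ne hjk fun h => by subst h; omega
  exact containsPat_one_two_three_iff.mpr ⟨0, j, k, h0j, hjk, hk, by omega, by omega, by omega⟩

lemma not_containsPat_one_two_three_of_forall_mem {w : List ℕ}
    (hw : ∀ a ∈ w, a = 1 ∨ a = 2) : ¬ ContainsPat w [1, 2, 3] := by
  rw [containsPat_one_two_three_iff]
  rintro ⟨i, j, k, hij, hjk, hk, hne⟩
  have := hw _ (List.getElem_mem (n := i) (by omega))
  have := hw _ (List.getElem_mem (n := j) (by omega))
  have := hw _ (List.getElem_mem hk)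
  omega

theorem stmt0_general (n : ℕ) :
    Rn n [1, 2, 3] =
      {w : List ℕ | w.length = n ∧ IsRGF w ∧ ∀ a ∈ w, a = 1 ∨ a = 2} := by
  ext w
  simp only [Rn, Set.mem_ofPred_eq, and_congr_right_iff]
  intro _ hw
  refine ⟨fun havoid a ha => ?_, not_containsPat_one_two_three_of_forall_mem⟩
  have := hw.1 a ha
  by_contra h
  exact havoid (hw.containsPat_one_two_three_of_mem ha (by omega))

/-- For every `n ≥ 1`, `R_n(1/2/3)` equals the set of RGFs of
length `n` all of whose letters are `1` or `2`. -/
theorem stmt0 (n : ℕ) (hn : 1 ≤ n) :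
    Rn n [1, 2, 3] =
      {w : List ℕ | w.length = n ∧ IsRGF w ∧ ∀ a ∈ w, a = 1 ∨ a = 2} :=
  stmt0_general n
end

section
/- For every n ≥ 1, R_n(1/23) equals the set of RGFs w of length n for which there exist l ≥ 0 and m ≥ 1 with l + m = n such that w is obtained from the word 1^l 2 3 ⋯ m (meaning l copies of 1 followed by the letters 2,3,…,m, these being absent when m = 1) by inserting a single additional letter 1 at some position, the result being an RGF. -/
open Finset

/-!
In a word avoiding `1/23`, a letter repeated at positions `p < k` equals every letter before `p`.
As an RGF starts with `1`, only `1` can repeat, and all `1`s except the last one form a prefix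
`1^l`. Every other letter is then new, so the RGF condition forces it to be one more than the
running maximum, i.e. `2 +` the number of earlier letters different from `1`. This determines the
word: `1^l 2 3 ⋯` with one more `1` inserted. Conversely, in such a word only `1` repeats and
every `1` but the inserted one precedes all other letters.
-/

/-- The word `1^l 2 3 ⋯ (k+1)`. -/
def stairWord (l k : ℕ) : List ℕ := List.replicate l 1 ++ List.range' 2 k

lemma length_stairWord (l k : ℕ) : (stairWord l k).length = l + k := by
  simp [stairWord]

lemma getD_stairWord (l k i : ℕ) :
    (stairWord l k).getD i 0 = if i < l then 1 else if i < l + k then i - l + 2 else 0 := by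
  simp only [stairWord, List.getD_eq_getElem?_getD, List.getElem?_append,
    List.length_replicate, List.getElem?_replicate]
  split_ifs
  · rfl
  · rw [List.getElem?_range' (by omega)]; simp; omega
  · rw [List.getElem?_eq_none (by simp; omega)]; rfl

lemma getD_take_append_cons_drop {α : Type*} {L : List α} {j : ℕ} (hj : j ≤ L.length)
    (a d : α) (i : ℕ) :
    (L.take j ++ a :: L.drop j).getD i d =
      if i < j then L.getD i d else if i = j then a else L.getD (i - 1) d := by
  simp only [List.getD_eq_getElem?_getD, List.getElem?_append, List.length_take,
    List.getElem?_take, List.getElem?_cons, List.getElem?_drop]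
  split_ifs <;> first | omega | (congr 2; omega) | simp_all

-- For `j < l` the letter at position `l` is `1 = l - l + 1`, so that case needs no own branch.
lemma getD_stairWord_insert_one {l k j : ℕ} (hj : j ≤ l + k) {i : ℕ} (hi : i ≤ l + k) :
    ((stairWord l k).take j ++ 1 :: (stairWord l k).drop j).getD i 0 =
      if i < l ∨ i = j then 1 else if i < j then i - l + 2 else i - l + 1 := by
  rw [getD_take_append_cons_drop (by rwa [length_stairWord]), getD_stairWord, getD_stairWord]
  split_ifs <;> omega

def Avoids122 (w : List ℕ) : Prop :=
  ∀ i p k : ℕ, i < p → p < k → k < w.length →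
    w.getD p 0 = w.getD k 0 → w.getD i 0 = w.getD p 0

lemma not_containsPat_122_iff {w : List ℕ} : ¬ ContainsPat w [1, 2, 2] ↔ Avoids122 w := by
  have getD_eq (t : Fin w.length) : w.get t = w.getD t 0 := (List.getD_eq_getElem _ _ t.2).symm
  constructor
  · intro h i p k hip hpk hk hpk_eq
    by_contra hne
    rw [List.getD_eq_getElem _ _ (by omega), List.getD_eq_getElem _ _ (by omega)] at hne
    rw [List.getD_eq_getElem _ _ (by omega), List.getD_eq_getElem _ _ hk] at hpk_eq
    have hik : w[i] ≠ w[k] := hpk_eq ▸ hne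
    refine h ⟨![⟨i, by omega⟩, ⟨p, by omega⟩, ⟨k, hk⟩], ?_, ?_⟩
    · intro a b hab
      fin_cases a <;> fin_cases b <;> simp [Fin.lt_def] at hab ⊢ <;> omega
    · intro a b
      fin_cases a <;> fin_cases b <;> simp [hpk_eq, hik, Ne.symm hik]
  · rintro hav ⟨f, hf, hpat⟩
    have h12 : w.get (f 1) = w.get (f 2) := (hpat 1 2).2 rfl
    have h01 : w.get (f 0) ≠ w.get (f 1) := fun h => by simpa using (hpat 0 1).1 h
    simp only [getD_eq] at h12 h01
    exact h01 (hav _ _ _ (hf (by decide)) (hf (by decide)) (f 2).2 h12)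

lemma avoids122_stairWord_insert_one {l k j : ℕ} (hj : j ≤ l + k) :
    Avoids122 ((stairWord l k).take j ++ 1 :: (stairWord l k).drop j) := by
  intro i p q hip hpq hq hpqv
  simp only [List.length_append, List.length_take, List.length_cons, List.length_drop,
    length_stairWord] at hq
  have hval := fun t (ht : t ≤ l + k) => getD_stairWord_insert_one hj ht
  rw [hval p (by omega), hval q (by omega)] at hpqv
  rw [hval i (by omega), hval p (by omega)]
  split_ifs at hpqv ⊢ <;> omega

lemma foldr_max_append_singleton (L : List ℕ) (a : ℕ) :
    (L ++ [a]).foldr max 0 = max (L.foldr max 0) a := by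
  induction L with
  | nil => simp
  | cons x xs ih => simp [ih]

lemma foldr_max_take_succ {w : List ℕ} {i : ℕ} (hi : i < w.length) :
    (w.take (i + 1)).foldr max 0 = max ((w.take i).foldr max 0) (w.getD i 0) := by
  rw [List.take_add_one, List.getElem?_eq_getElem hi, List.getD_eq_getElem _ _ hi]
  exact foldr_max_append_singleton _ _

namespace IsRGF

variable {w : List ℕ}

lemma one_le_getD (hw : IsRGF w) {i : ℕ} (hi : i < w.length) : 1 ≤ w.getD i 0 :=
  hw.1 _ (List.getD_eq_getElem w 0 hi ▸ List.getElem_mem hi)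

lemma getD_le_foldr_max_take_add_one (hw : IsRGF w) {i : ℕ} (hi0 : 0 < i)
    (hi : i < w.length) : w.getD i 0 ≤ (w.take i).foldr max 0 + 1 := by
  obtain ⟨j, rfl⟩ : ∃ j, i = j + 1 := ⟨i - 1, by omega⟩
  simpa [add_comm] using hw.2.2 j hi

lemma exists_getD_eq_of_le_foldr_max (hw : IsRGF w) {i : ℕ} (hi : i < w.length) {v : ℕ}
    (hv1 : 1 ≤ v) (hv : v ≤ (w.take (i + 1)).foldr max 0) : ∃ t ≤ i, w.getD t 0 = v := by
  induction i generalizing v with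
  | zero =>
    rw [foldr_max_take_succ hi, hw.2.1 hi] at hv
    exact ⟨0, le_rfl, by rw [hw.2.1 hi]; simp at hv; omega⟩
  | succ i ih =>
    rw [foldr_max_take_succ hi] at hv
    by_cases hvi : v ≤ (w.take (i + 1)).foldr max 0
    · obtain ⟨t, hti, ht⟩ := ih (by omega) hv1 hvi
      exact ⟨t, by omega, ht⟩
    · have := hw.getD_le_foldr_max_take_add_one (by omega : 0 < i + 1) hi
      exact ⟨i + 1, le_rfl, by omega⟩

end IsRGF

namespace Avoids122

variable {w : List ℕ}

lemma getD_eq_one_of_getD_eq (hav : Avoids122 w) (h0 : w.getD 0 0 = 1) {t i : ℕ}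
    (hti : t < i) (hi : i < w.length) (h : w.getD t 0 = w.getD i 0) : w.getD i 0 = 1 := by
  rcases Nat.eq_zero_or_pos t with rfl | ht
  · rw [← h, h0]
  · rw [← h, ← hav 0 t i ht hti hi h, h0]

lemma exists_getD_eq_one_iff (hav : Avoids122 w) (h0 : w.getD 0 0 = 1)
    (hlen : 0 < w.length) :
    ∃ l j, l ≤ j ∧ j < w.length ∧ ∀ t < w.length, (w.getD t 0 = 1 ↔ t < l ∨ t = j) := by
  classical
  set j := Nat.findGreatest (fun t => w.getD t 0 = 1) (w.length - 1)
  have hj1 : w.getD j 0 = 1 :=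
    Nat.findGreatest_spec (P := fun t => w.getD t 0 = 1) (Nat.zero_le _) h0
  have hj : j < w.length :=
    (Nat.findGreatest_le (P := fun t => w.getD t 0 = 1) _).trans_lt (by omega)
  have hex : ∃ t, t = j ∨ w.getD t 0 ≠ 1 := ⟨j, Or.inl rfl⟩
  set l := Nat.find hex
  refine ⟨l, j, Nat.find_min' hex (Or.inl rfl), hj, fun t ht => ⟨fun ht1 => ?_, ?_⟩⟩
  · rcases (Nat.le_findGreatest (by omega) ht1 : t ≤ j).lt_or_eq with htj | rfl
    · refine Or.inl (lt_of_not_ge fun hlt => ?_)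
      have hl1 : w.getD l 0 = 1 := by
        rcases hlt.lt_or_eq with hlt | rfl
        · exact (hav l t j hlt htj hj (ht1.trans hj1.symm)).trans ht1
        · exact ht1
      exact (Nat.find_spec hex).elim (fun hlj => by omega) (· hl1)
    · exact Or.inr rfl
  · rintro (htl | rfl)
    · exact not_not.1 (not_or.1 (Nat.find_min hex htl)).2
    · exact hj1

end Avoids122

def countNeOne (w : List ℕ) (i : ℕ) : ℕ := #{t ∈ range i | w.getD t 0 ≠ 1}

lemma countNeOne_succ (w : List ℕ) (i : ℕ) :
    countNeOne w (i + 1) = countNeOne w i + if w.getD i 0 ≠ 1 then 1 else 0 := by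
  simp only [countNeOne, card_filter, sum_range_succ]

lemma countNeOne_eq_card_erase {w : List ℕ} {l j : ℕ}
    (hones : ∀ t < w.length, (w.getD t 0 = 1 ↔ t < l ∨ t = j)) {i : ℕ} (hi : i ≤ w.length) :
    countNeOne w i = #((Ico l i).erase j) := by
  unfold countNeOne
  congr 1
  ext t
  simp only [mem_filter, mem_range, mem_erase, mem_Ico]
  constructor
  · rintro ⟨hti, ht1⟩
    have := (hones t (by omega)).not.1 ht1
    omega
  · rintro ⟨htj, hlt, hti⟩
    exact ⟨hti, (hones t (by omega)).not.2 (by omega)⟩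

namespace IsRGF

variable {w : List ℕ}

lemma getD_eq_foldr_max_take_add_one (hw : IsRGF w) (hav : Avoids122 w) {i : ℕ}
    (hi0 : 0 < i) (hi : i < w.length) (h1 : w.getD i 0 ≠ 1) :
    w.getD i 0 = (w.take i).foldr max 0 + 1 := by
  refine le_antisymm (hw.getD_le_foldr_max_take_add_one hi0 hi) (not_lt.1 fun hlt => ?_)
  obtain ⟨t, hti, ht⟩ := hw.exists_getD_eq_of_le_foldr_max (i := i - 1) (by omega)
    (hw.one_le_getD hi) (by rw [Nat.sub_add_cancel hi0]; omega)
  exact h1 (hav.getD_eq_one_of_getD_eq (hw.2.1 (by omega)) (by omega) hi ht)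

lemma foldr_max_take_eq_countNeOne_add_one (hw : IsRGF w) (hav : Avoids122 w) {i : ℕ}
    (hi0 : 0 < i) (hi : i ≤ w.length) : (w.take i).foldr max 0 = countNeOne w i + 1 := by
  induction i, hi0 using Nat.le_induction with
  | base =>
    rw [foldr_max_take_succ (by omega), countNeOne_succ, hw.2.1 (by omega)]
    simp [countNeOne]
  | succ i hi0 ih =>
    rw [foldr_max_take_succ (by omega), countNeOne_succ, ih (by omega)]
    by_cases h1 : w.getD i 0 = 1
    · rw [if_neg (not_not.2 h1), h1]
      omega
    · rw [if_pos h1, hw.getD_eq_foldr_max_take_add_one hav hi0 (by omega) h1, ih (by omega)]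
      omega

lemma getD_eq_countNeOne_add_two (hw : IsRGF w) (hav : Avoids122 w) {i : ℕ}
    (hi : i < w.length) (h1 : w.getD i 0 ≠ 1) : w.getD i 0 = countNeOne w i + 2 := by
  have hi0 : 0 < i := Nat.pos_of_ne_zero fun h => h1 (h ▸ hw.2.1 (by omega))
  rw [hw.getD_eq_foldr_max_take_add_one hav hi0 hi h1,
    hw.foldr_max_take_eq_countNeOne_add_one hav hi0 hi.le]

lemma eq_stairWord_insert_one (hw : IsRGF w) (hav : Avoids122 w) (hlen : 0 < w.length) :
    ∃ l j, l ≤ j ∧ j < w.length ∧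
      w = (stairWord l (w.length - l - 1)).take j ++
        1 :: (stairWord l (w.length - l - 1)).drop j := by
  obtain ⟨l, j, hlj, hj, hones⟩ := hav.exists_getD_eq_one_iff (hw.2.1 hlen) hlen
  refine ⟨l, j, hlj, hj, List.ext_getElem ?_ fun i h1 h2 => ?_⟩
  · simp only [List.length_append, List.length_take, List.length_cons, List.length_drop,
      length_stairWord]
    omega
  rw [← List.getD_eq_getElem w 0, ← List.getD_eq_getElem _ 0,
    getD_stairWord_insert_one (by omega) (by omega)]
  split_ifs with hone hij
  · exact (hones i h1).2 hone
  · rw [hw.getD_eq_countNeOne_add_two hav h1 ((hones i h1).not.2 hone),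
      countNeOne_eq_card_erase hones h1.le, erase_eq_of_notMem (by simp; omega), Nat.card_Ico]
  · rw [hw.getD_eq_countNeOne_add_two hav h1 ((hones i h1).not.2 hone),
      countNeOne_eq_card_erase hones h1.le, card_erase_of_mem (by simp; omega), Nat.card_Ico]
    omega

end IsRGF

/-- For every `n ≥ 1`, `R_n(1/23)` equals the set of RGFs `w` of
length `n` obtained from a word `1^l 2 3 ⋯ m` (with `l ≥ 0`, `m ≥ 1`,
`l + m = n`) by inserting a single additional letter `1` at some position,
the result being an RGF. -/
theorem stmt1 (n : ℕ) (hn : 1 ≤ n) :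
    Rn n [1, 2, 2] =
      {w : List ℕ | w.length = n ∧ IsRGF w ∧
        ∃ l m j : ℕ, 1 ≤ m ∧ l + m = n ∧
          j ≤ (List.replicate l 1 ++ List.range' 2 (m - 1)).length ∧
          w = (List.replicate l 1 ++ List.range' 2 (m - 1)).take j
              ++ 1 :: (List.replicate l 1 ++ List.range' 2 (m - 1)).drop j} := by
  ext w
  simp only [Rn, Set.mem_ofPred_eq, not_containsPat_122_iff]
  constructor
  · rintro ⟨rfl, hw, hav⟩
    obtain ⟨l, j, hlj, hj, hw_eq⟩ := hw.eq_stairWord_insert_one hav (by omega)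
    refine ⟨rfl, hw, l, w.length - l, j, by omega, by omega, by simp; omega, hw_eq⟩
  · rintro ⟨hlen, hw, l, m, j, -, -, hj, rfl⟩
    exact ⟨hlen, hw, avoids122_stairWord_insert_one (by simpa using hj)⟩
end

section
/- For every n ≥ 1, R_n(13/2) equals the set of layered RGFs of length n, i.e. words of the form w = 1^{n_1} 2^{n_2} ⋯ m^{n_m} for some m ≥ 1 and positive integers n_1,…,n_m with n_1 + ⋯ + n_m = n. -/
open Finset

/-! An RGF avoids `13/2`, i.e. the word pattern `121`, exactly when it is weakly increasing. If
`w[j] > w[j+1]`, the growth condition at `j` puts `w[j+1]` below the maximum of the prefix before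
`j`; an RGF prefix contains every value up to its maximum, so `w[j+1]` occurs at some `i < j`, and
positions `i, j, j+1` form the pattern. A weakly increasing RGF starts at `1` and climbs by steps of
`0` or `1`, which is exactly a layered word `1^{n_1} ⋯ m^{n_m}`; conversely, such words are
weakly increasing RGFs. -/

theorem foldr_max_eq_max (l : List ℕ) (a : ℕ) : l.foldr max a = max (l.foldr max 0) a := by
  induction l with
  | nil => simp
  | cons b t ih => simp [ih, max_assoc]

theorem containsPat_121_iff (w : List ℕ) :
    ContainsPat w [1, 2, 1] ↔
      ∃ i j k : Fin w.length, i < j ∧ j < k ∧ w.get i = w.get k ∧ w.get i ≠ w.get j := by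
  constructor
  · rintro ⟨f, hmono, hpat⟩
    exact ⟨f 0, f 1, f 2, hmono (by decide), hmono (by decide), (hpat 0 2).mpr rfl,
      fun h => absurd ((hpat 0 1).mp h) (by decide)⟩
  · rintro ⟨i, j, k, hij, hjk, heq, hne⟩
    refine ⟨![i, j, k], ?_, ?_⟩
    · refine Fin.strictMono_iff_lt_succ.mpr fun a => ?_
      fin_cases a
      exacts [hij, hjk]
    · intro a b
      fin_cases a <;> fin_cases b <;> simp_all [eq_comm]

theorem not_containsPat_121_of_pairwise {w : List ℕ} (hw : w.Pairwise (· ≤ ·)) :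
    ¬ ContainsPat w [1, 2, 1] := by
  rw [containsPat_121_iff]
  rintro ⟨i, j, k, hij, hjk, heq, hne⟩
  have := hw.rel_get_of_lt hij
  have := hw.rel_get_of_lt hjk
  omega

def UpByAtMostOne (a b : ℕ) : Prop := a ≤ b ∧ b ≤ a + 1

theorem pairwise_le_of_isChain_upByAtMostOne {w : List ℕ} (hw : w.IsChain UpByAtMostOne) :
    w.Pairwise (· ≤ ·) :=
  List.isChain_iff_pairwise.mp (hw.imp fun _ _ h => h.1)

namespace IsRGF

variable {w : List ℕ}

theorem head?_eq_one (hw : IsRGF w) (hne : w ≠ []) : w.head? = some 1 := by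
  have hlen := List.length_pos_iff.mpr hne
  rw [List.head?_eq_getElem?, List.getElem?_eq_getElem hlen, ← List.getD_eq_getElem]
  exact congrArg some (hw.2.1 hlen)

theorem getElem_le_succ_foldr_max_take (hw : IsRGF w) (j : ℕ) (hj : j < w.length) :
    w[j] ≤ 1 + (w.take j).foldr max 0 := by
  cases j with
  | zero =>
    have h0 := hw.2.1 hj
    rw [List.getD_eq_getElem _ _ hj] at h0
    simp [h0]
  | succ j =>
    have hgrow := hw.2.2 j hj
    rwa [List.getD_eq_getElem _ _ hj] at hgrow

theorem mem_take_of_le_foldr_max (hw : IsRGF w) {j : ℕ} (hj : j ≤ w.length) {v : ℕ}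
    (hv : 1 ≤ v) (hvj : v ≤ (w.take j).foldr max 0) : v ∈ w.take j := by
  induction j with
  | zero => simp only [List.take_zero, List.foldr_nil] at hvj; omega
  | succ j ih =>
    have htake : w.take (j + 1) = w.take j ++ [w[j]] := by
      rw [List.take_add_one, List.getElem?_eq_getElem (by omega)]
      rfl
    rw [htake, List.foldr_append, List.foldr_cons, List.foldr_nil, foldr_max_eq_max] at hvj
    rw [htake]
    by_cases hvM : v ≤ (w.take j).foldr max 0
    · exact List.mem_append_left _ (ih (by omega) hvM)
    · have := hw.getElem_le_succ_foldr_max_take j hj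
      obtain rfl : v = w[j] := by omega
      exact List.mem_append_right _ (List.mem_singleton_self _)

theorem pairwise_le_of_not_containsPat (hw : IsRGF w) (havoid : ¬ ContainsPat w [1, 2, 1]) :
    w.Pairwise (· ≤ ·) := by
  refine List.isChain_iff_pairwise.mp (List.isChain_iff_getElem.mpr fun j hj => ?_)
  by_contra! hlt
  have hbound := hw.getElem_le_succ_foldr_max_take j (by omega)
  have hmem := hw.mem_take_of_le_foldr_max (j := j) (by omega) (hw.1 _ (List.getElem_mem hj))
    (by omega)
  obtain ⟨i, hi, hieq⟩ := List.getElem_of_mem hmem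
  rw [List.length_take] at hi
  rw [List.getElem_take] at hieq
  refine havoid ((containsPat_121_iff w).mpr ⟨⟨i, by omega⟩, ⟨j, by omega⟩, ⟨j + 1, hj⟩,
    Fin.mk_lt_mk.mpr (by omega), Fin.mk_lt_mk.mpr (by omega), hieq, ?_⟩)
  simp only [List.get_eq_getElem]
  omega

theorem isChain_upByAtMostOne (hw : IsRGF w) (hsorted : w.Pairwise (· ≤ ·)) :
    w.IsChain UpByAtMostOne := by
  refine List.isChain_iff_getElem.mpr fun j hj => ⟨?_, ?_⟩
  · exact hsorted.rel_get_of_lt (a := ⟨j, by omega⟩) (b := ⟨j + 1, hj⟩)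
      (Fin.mk_lt_mk.mpr (by omega))
  · have hmax : (w.take (j + 1)).foldr max 0 ≤ w[j] := by
      refine List.max_le_of_forall_le _ _ fun x hx => ?_
      obtain ⟨i, hi, rfl⟩ := List.getElem_of_mem hx
      rw [List.length_take] at hi
      rw [List.getElem_take]
      exact hsorted.rel_get_of_le (a := ⟨i, by omega⟩) (b := ⟨j, by omega⟩)
        (Fin.mk_le_mk.mpr (by omega))
    have := hw.getElem_le_succ_foldr_max_take (j + 1) hj
    omega

end IsRGF

theorem isRGF_of_isChain {w : List ℕ} (h1 : w.head? = some 1) (hw : w.IsChain UpByAtMostOne) :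
    IsRGF w := by
  obtain ⟨t, rfl⟩ := List.head?_eq_some_iff.mp h1
  have hsorted := pairwise_le_of_isChain_upByAtMostOne hw
  refine ⟨fun a ha => ?_, fun _ => rfl, fun j hj => ?_⟩
  · rcases List.mem_cons.mp ha with rfl | ha
    · exact le_rfl
    · exact List.rel_of_pairwise_cons hsorted ha
  · have hstep := (List.isChain_iff_getElem.mp hw j hj).2
    have hle := List.le_max_of_le' (l := (1 :: t).take (j + 1)) 0
      (List.getElem_mem (show j < ((1 :: t).take (j + 1)).length by
        rw [List.length_take]; exact lt_min (by omega) (by omega))) le_rfl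
    rw [List.getElem_take] at hle
    rw [List.getD_eq_getElem _ _ hj]
    omega

def layered (m : ℕ) (f : ℕ → ℕ) : List ℕ :=
  (List.range m).flatMap fun i => List.replicate (f i) (i + 1)

section Layered

variable {m : ℕ} {f : ℕ → ℕ}

theorem layered_zero (f : ℕ → ℕ) : layered 0 f = [] := rfl

theorem layered_succ (m : ℕ) (f : ℕ → ℕ) :
    layered (m + 1) f = layered m f ++ List.replicate (f m) (m + 1) := by
  simp [layered, List.range_succ]

theorem length_layered (m : ℕ) (f : ℕ → ℕ) :
    (layered m f).length = ∑ i ∈ range m, f i := by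
  induction m with
  | zero => rfl
  | succ m ih => simp [layered_succ, ih, sum_range_succ]

theorem layered_congr {g : ℕ → ℕ} (h : ∀ i < m, f i = g i) : layered m f = layered m g := by
  unfold layered
  exact List.flatMap_congr fun i hi => by rw [h i (List.mem_range.mp hi)]

theorem head?_layered (hm : 1 ≤ m) (hf : ∀ i < m, 0 < f i) : (layered m f).head? = some 1 := by
  induction m, hm using Nat.le_induction with
  | base => simp [layered_succ, layered_zero, List.head?_replicate, (hf 0 one_pos).ne']
  | succ m hm ih => simp [layered_succ, ih fun i hi => hf i (by omega)]

theorem getLast?_layered (hm : 1 ≤ m) (hf : ∀ i < m, 0 < f i) :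
    (layered m f).getLast? = some m := by
  obtain ⟨k, rfl⟩ := Nat.exists_eq_add_of_le' hm
  simp [layered_succ, List.getLast?_replicate, (hf k (by omega)).ne']

theorem isChain_layered (hf : ∀ i < m, 0 < f i) : (layered m f).IsChain UpByAtMostOne := by
  induction m with
  | zero => exact List.isChain_nil
  | succ m ih =>
    rw [layered_succ]
    refine List.isChain_append.mpr ⟨ih fun i hi => hf i (by omega),
      List.isChain_replicate_of_rel _ ⟨le_rfl, by omega⟩, fun x hx y hy => ?_⟩
    rcases Nat.eq_zero_or_pos m with rfl | hm
    · simp [layered_zero] at hx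
    · rw [getLast?_layered hm fun i hi => hf i (by omega), Option.mem_some_iff] at hx
      simp only [List.head?_replicate, (hf m (by omega)).ne', if_false, Option.mem_some_iff] at hy
      exact ⟨by omega, by omega⟩

theorem layered_append_new_block (m : ℕ) (f : ℕ → ℕ) :
    layered m f ++ [m + 1] = layered (m + 1) (Function.update f m 1) := by
  rw [layered_succ, layered_congr (g := Function.update f m 1)
    fun i hi => (Function.update_of_ne hi.ne _ _).symm]
  simp

theorem layered_append_last_block (k : ℕ) (f : ℕ → ℕ) :
    layered (k + 1) f ++ [k + 1] = layered (k + 1) (Function.update f k (f k + 1)) := by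
  rw [layered_succ, layered_succ, layered_congr (g := Function.update f k (f k + 1))
    fun i hi => (Function.update_of_ne hi.ne _ _).symm]
  simp [List.replicate_succ']

theorem exists_eq_layered {w : List ℕ} (h1 : w.head? = some 1)
    (hw : w.IsChain UpByAtMostOne) :
    ∃ m f, 1 ≤ m ∧ (∀ i < m, 0 < f i) ∧ w = layered m f := by
  induction w using List.reverseRecOn with
  | nil => simp at h1
  | append_singleton l a ih =>
    rcases eq_or_ne l [] with rfl | hl
    · obtain rfl : a = 1 := by simpa using h1
      exact ⟨1, fun _ => 1, le_rfl, fun _ _ => one_pos, rfl⟩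
    obtain ⟨m, f, hm, hf, rfl⟩ :=
      ih (by rwa [List.head?_append_of_ne_nil _ hl] at h1)
        (List.isChain_append.mp hw).1
    obtain ⟨hma, ham⟩ : UpByAtMostOne m a := (List.isChain_append.mp hw).2.2 m
      (by rw [getLast?_layered hm hf]; rfl) a rfl
    rcases (by omega : a = m + 1 ∨ a = m) with rfl | rfl
    · refine ⟨m + 1, _, by omega, fun i hi => ?_, layered_append_new_block m f⟩
      rcases eq_or_ne i m with rfl | hne
      · simp
      · simpa [hne] using hf i (by omega)
    · obtain ⟨k, rfl⟩ := Nat.exists_eq_add_of_le' hm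
      refine ⟨k + 1, _, hm, fun i hi => ?_, layered_append_last_block k f⟩
      rcases eq_or_ne i k with rfl | hne
      · simp
      · simpa [hne] using hf i hi

end Layered

/-- For every `n ≥ 1`, `R_n(13/2)` equals the set of layered
words `1^{n_1} 2^{n_2} ⋯ m^{n_m}` with `m ≥ 1`, all `n_i > 0` and
`n_1 + ⋯ + n_m = n`. -/
theorem stmt2 (n : ℕ) (hn : 1 ≤ n) :
    Rn n [1, 2, 1] =
      {w : List ℕ | ∃ (m : ℕ) (f : ℕ → ℕ), 1 ≤ m ∧ (∀ i < m, 0 < f i) ∧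
        (∑ i ∈ Finset.range m, f i) = n ∧
        w = (List.range m).flatMap fun i => List.replicate (f i) (i + 1)} := by
  ext w
  constructor
  · rintro ⟨hlen, hrgf, havoid⟩
    have hne : w ≠ [] := List.length_pos_iff.mp (by omega)
    obtain ⟨m, f, hm, hf, rfl⟩ := exists_eq_layered (hrgf.head?_eq_one hne)
      (hrgf.isChain_upByAtMostOne (hrgf.pairwise_le_of_not_containsPat havoid))
    exact ⟨m, f, hm, hf, (length_layered m f).symm.trans hlen, rfl⟩
  · rintro ⟨m, f, hm, hf, hsum, rfl⟩
    have hchain := isChain_layered hf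
    exact ⟨(length_layered m f).trans hsum, isRGF_of_isChain (head?_layered hm hf) hchain,
      not_containsPat_121_of_pairwise (pairwise_le_of_isChain_upByAtMostOne hchain)⟩
end

section
/- For every n ≥ 1, R_n(12/3) equals the set of RGFs w = a_1⋯a_n of length n for which there exists m with 1 ≤ m ≤ n such that a_i = i for all 1 ≤ i ≤ m and a_{m+1} = a_{m+2} = ⋯ = a_n are all equal to a common value at most m (the latter condition being vacuous when m = n). -/
open Finset

lemma foldrMaxLe (m : ℕ) : ∀ l : List ℕ, (∀ x ∈ l, x ≤ m) → l.foldr max 0 ≤ m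
  | [], _ => Nat.zero_le m
  | a :: t, h => by
      simp only [List.foldr_cons]
      exact max_le (h a (by simp)) (foldrMaxLe m t fun x hx => h x (by simp [hx]))

/-- For every `n ≥ 1`, `R_n(12/3)` equals the set of RGFs
`w = a₁⋯aₙ` of length `n` for which there is `1 ≤ m ≤ n` with `aᵢ = i` for
`1 ≤ i ≤ m` and `a_{m+1} = ⋯ = a_n` all equal to a common value at most `m`
(vacuous when `m = n`).  (Positions are 0-indexed below.) -/
theorem stmt3 (n : ℕ) (hn : 1 ≤ n) :
    Rn n [1, 1, 2] =
      {w : List ℕ | w.length = n ∧ IsRGF w ∧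
        ∃ m : ℕ, 1 ≤ m ∧ m ≤ n ∧ (∀ i < m, w.getD i 0 = i + 1) ∧
          ∃ c : ℕ, c ≤ m ∧ ∀ i, m ≤ i → i < n → w.getD i 0 = c} := by
  
  ext w
  simp only [Rn, Set.mem_setOf_eq]
  constructor
  · rintro ⟨hlen, hrgf, havoid⟩
    refine ⟨hlen, hrgf, ?_⟩
    by_cases hall : ∀ i < n, w.getD i 0 = i + 1
    · exact ⟨n, hn, le_refl n, fun i hi => hall i hi, 1, hn, fun i h1 h2 => by omega⟩
    · push_neg at hall
      obtain ⟨i0, hi0n, hi0⟩ := hall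
      have hex : ∃ i, i < n ∧ w.getD i 0 ≠ i + 1 := ⟨i0, hi0n, hi0⟩
      set m := Nat.find hex with hmdef
      obtain ⟨hmn, hmne⟩ := Nat.find_spec hex
      rw [← hmdef] at hmn hmne
      have hpre : ∀ i < m, w.getD i 0 = i + 1 := by
        intro i hi
        have h := Nat.find_min hex hi
        push_neg at h
        exact h (lt_trans hi hmn)
      have hm1 : 1 ≤ m := by
        rcases Nat.eq_zero_or_pos m with h0 | h
        · exfalso
          have h1 : w.getD 0 0 = 1 := hrgf.2.1 (by omega)
          rw [h0] at hmne; exact hmne h1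
        · exact h
      set c := w.getD m 0 with hc
      have hmwlen : m < w.length := by omega
      have hc1 : 1 ≤ c := by
        have hmem : w.getD m 0 ∈ w := by
          rw [List.getD_eq_getElem w 0 hmwlen]; exact List.getElem_mem _
        exact hrgf.1 _ hmem
      have hcm : c ≤ m := by
        have hb := hrgf.2.2 (m - 1) (by omega)
        have hm' : m - 1 + 1 = m := by omega
        rw [hm'] at hb
        have hmax : (w.take m).foldr max 0 ≤ m := by
          apply foldrMaxLe
          intro x hx
          rw [List.mem_iff_getElem] at hx
          obtain ⟨j, hj, hxe⟩ := hx
          have hjm : j < m := by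
            simp only [List.length_take] at hj; omega
          rw [List.getElem_take] at hxe
          have hj1 : w.getD j 0 = j + 1 := hpre j hjm
          rw [List.getD_eq_getElem w 0 (by omega)] at hj1
          omega
        omega
      refine ⟨m, hm1, by omega, hpre, c, hcm, ?_⟩
      intro i hmi hin
      rcases eq_or_lt_of_le hmi with he | hlt
      · rw [← he]
      · by_contra hne
        apply havoid
        have hb0 : c - 1 < w.length := by omega
        have hb1 : m < w.length := hmwlen
        have hb2 : i < w.length := by omega
        refine ⟨fun t => ⟨if (t : ℕ) ≤ 1 then (if (t : ℕ) = 0 then c - 1 else m) else i,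
          by split_ifs <;> omega⟩, ?_, ?_⟩
        · intro a b hab
          have hab' : (a : ℕ) < b := hab
          have hb3 : (b : ℕ) < 3 := b.isLt
          show Fin.mk _ _ < Fin.mk _ _
          rw [Fin.mk_lt_mk]
          split_ifs <;> omega
        · have g : ∀ j : Fin w.length, w.get j = w.getD j.val 0 := fun j => by
            rw [List.get_eq_getElem, List.getD_eq_getElem w 0 j.isLt]
          have hpget : ∀ t : Fin ([1,1,2] : List ℕ).length,
              ([1,1,2] : List ℕ).get t = if (t : ℕ) ≤ 1 then 1 else 2 := by decide
          have hv : ∀ t : Fin ([1,1,2] : List ℕ).length,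
              w.getD (if (t : ℕ) ≤ 1 then (if (t : ℕ) = 0 then c - 1 else m) else i) 0
                = if (t : ℕ) ≤ 1 then c else w.getD i 0 := by
            intro t
            split_ifs with h1 h2
            · have := hpre (c - 1) (by omega); omega
            · rfl
            · rfl
          intro a b
          rw [g, g, hpget, hpget]
          dsimp only
          rw [hv a, hv b]
          split_ifs with h1 h2 h2
          · simp
          · simp only [eq_comm (a := c)]
            exact iff_of_false hne (by omega)
          · exact iff_of_false hne (by omega)
          · simp
  · rintro ⟨hlen, hrgf, m, hm1, hmn, hpre, c, hcm, htail⟩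
    refine ⟨hlen, hrgf, ?_⟩
    rintro ⟨f, hmono, hiff⟩
    set t0 : Fin ([1,1,2] : List ℕ).length := ⟨0, by norm_num⟩ with ht0
    set t1 : Fin ([1,1,2] : List ℕ).length := ⟨1, by norm_num⟩ with ht1
    set t2 : Fin ([1,1,2] : List ℕ).length := ⟨2, by norm_num⟩ with ht2
    have h01 : w.get (f t0) = w.get (f t1) := (hiff t0 t1).mpr rfl
    have h12 : w.get (f t1) ≠ w.get (f t2) := by
      intro h
      have h' := (hiff t1 t2).mp h
      rw [ht1, ht2] at h'
      exact absurd h' (by decide)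
    have hf01 : (f t0 : ℕ) < f t1 := hmono (by rw [ht0, ht1]; exact Fin.mk_lt_mk.mpr (by omega))
    have hf12 : (f t1 : ℕ) < f t2 := hmono (by rw [ht1, ht2]; exact Fin.mk_lt_mk.mpr (by omega))
    have g : ∀ j : Fin w.length, w.get j = w.getD j.val 0 := fun j => by
      rw [List.get_eq_getElem, List.getD_eq_getElem w 0 j.isLt]
    rw [g, g] at h01
    rw [g, g] at h12
    by_cases h1m : ((f t1 : Fin w.length) : ℕ) < m
    · have e0 := hpre (f t0) (lt_trans hf01 h1m)
      have e1 := hpre (f t1) h1m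
      omega
    · push_neg at h1m
      have e1 : w.getD (f t1) 0 = c := htail _ h1m (by rw [← hlen]; exact (f t1).isLt)
      have e2 : w.getD (f t2) 0 = c := htail _ (by omega) (by rw [← hlen]; exact (f t2).isLt)
      exact h12 (by rw [e1, e2])
end

section
/- For every n ≥ 1: LB_n(1/2/3; q) = RS_n(1/2/3; q) = 1 + ∑_{k=0}^{n-2} C(n-1, k+1) q^k, and LS_n(1/2/3; r) = RB_n(1/2/3; r) = (r+1)^{n-1}, as identities of polynomials. -/
/-!
A partition avoids `1/2/3` exactly when it has at most two blocks, so its RGFs of length `m + 1`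
are the words `1u` with `u ∈ {1,2}^m`. On these words each statistic is easy to update when a
letter is appended: a `2` adds one to `ls`, a `1` after some `2` adds one to `lb`, and appending
a `2` (resp. `1`) turns `rb` (resp. `rs`) into the number of `1`s (resp. `2`s) of the word,
while appending the other letter leaves it unchanged. The resulting recursions in `m` are
solved by `(r + 1)^m` and by the polynomial `p` with `q p = (q + 1)^m + q - 1`, which is
`1 + ∑ C(m, k+1) q^k` by the binomial theorem.
-/

open Finset

namespace SetPartition123

lemma getD_mem {w : List ℕ} {j : ℕ} (hj : j < w.length) : w.getD j 0 ∈ w := by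
  rw [List.getD_eq_getElem _ _ hj]
  exact List.getElem_mem hj

section Avoidance

variable {w : List ℕ}

lemma containsPat_of_lt_of_lt {i j k : Fin w.length} (hij : i < j) (hjk : j < k)
    (h₁ : w[i] ≠ w[j]) (h₂ : w[i] ≠ w[k]) (h₃ : w[j] ≠ w[k]) :
    ContainsPat w [1, 2, 3] := by
  refine ⟨![i, j, k], Fin.strictMono_iff_lt_succ.mpr fun a => ?_, fun a b => ?_⟩
  · fin_cases a <;> simpa
  · simp only [Fin.getElem_fin] at h₁ h₂ h₃
    fin_cases a <;> fin_cases b <;> simp [h₁, h₂, h₃, h₁.symm, h₂.symm, h₃.symm]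

lemma not_containsPat_of_subset (hw : w ⊆ [1, 2]) : ¬ ContainsPat w [1, 2, 3] := by
  rintro ⟨f, -, hf⟩
  have hne : ∀ a b : Fin 3, a ≠ b → w.get (f a) ≠ w.get (f b) := fun a b hab h => by
    have := (hf a b).mp h
    fin_cases a <;> fin_cases b <;> simp_all
  have hval : ∀ a : Fin 3, w.get (f a) = 1 ∨ w.get (f a) = 2 := fun a => by
    simpa using hw (List.get_mem w (f a))
  have := hne 0 1 (by decide)
  have := hne 0 2 (by decide)
  have := hne 1 2 (by decide)
  have := hval 0
  have := hval 1
  have := hval 2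
  omega

lemma mem_of_le_foldr_max {l : List ℕ} {c : ℕ} (hle : ∀ a ∈ l, a ≤ c)
    (hc : c ≤ l.foldr max 0) (hc0 : 0 < c) : c ∈ l := by
  by_contra hcl
  have : l.foldr max 0 ≤ c - 1 := List.max_le_of_forall_le _ _ fun a ha => by
    have := hle a ha
    have : a ≠ c := by rintro rfl; exact hcl ha
    omega
  omega

lemma le_two_of_isRGF (hw : IsRGF w) (hav : ¬ ContainsPat w [1, 2, 3]) : ∀ a ∈ w, a ≤ 2 := by
  suffices h : ∀ j (hj : j < w.length), w[j] ≤ 2 by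
    intro a ha
    obtain ⟨j, hj, rfl⟩ := List.getElem_of_mem ha
    exact h j hj
  have h0 : ∀ hw0 : 0 < w.length, w[0] = 1 := fun hw0 => by
    rw [← List.getD_eq_getElem _ 0 hw0]
    exact hw.2.1 hw0
  intro j
  induction j using Nat.strong_induction_on with
  | _ j ih =>
  intro hj
  rcases j with _ | i
  · exact (h0 hj).trans_le one_le_two
  have hpre : ∀ a ∈ w.take (i + 1), a ≤ 2 := fun a ha => by
    obtain ⟨k, hk, rfl⟩ := List.mem_take_iff_getElem.mp ha
    exact ih k (by omega) _
  have hgrow := hw.2.2 i hj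
  rw [List.getD_eq_getElem _ _ hj] at hgrow
  have hmax : (w.take (i + 1)).foldr max 0 ≤ 2 := List.max_le_of_forall_le _ _ hpre
  by_contra h3
  -- the letter `3` at `i + 1` is preceded by a `2`, and the word starts with `1`
  obtain ⟨k, hk, hk2⟩ :=
    List.mem_take_iff_getElem.mp (mem_of_le_foldr_max hpre (by omega) two_pos)
  have hk0 : 0 < k := Nat.pos_of_ne_zero (by rintro rfl; simp [h0] at hk2)
  exact hav (containsPat_of_lt_of_lt (i := ⟨0, by omega⟩) (j := ⟨k, by omega⟩)
    (k := ⟨i + 1, hj⟩) (Fin.mk_lt_mk.mpr hk0) (Fin.mk_lt_mk.mpr (by omega))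
    (by simp [h0, hk2]) (by simp [h0]; omega) (by simp [hk2]; omega))

lemma isRGF_of_subset (hl : 0 < w.length) (h0 : w.getD 0 0 = 1) (hw : w ⊆ [1, 2]) :
    IsRGF w := by
  refine ⟨fun a ha => ?_, fun _ => h0, fun j hj => ?_⟩
  · have := hw ha
    simp only [List.mem_cons, List.not_mem_nil, or_false] at this
    omega
  · have h1 : 1 ≤ (w.take (j + 1)).foldr max 0 :=
      List.le_max_of_le (h0 ▸ List.mem_take_iff_getElem.mpr
        ⟨0, by omega, (List.getD_eq_getElem _ _ hl).symm⟩) le_rfl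
    have h2 := hw (getD_mem hj)
    simp only [List.mem_cons, List.not_mem_nil, or_false] at h2
    omega

end Avoidance

def twoLetterRGFs : ℕ → Finset (List ℕ)
  | 0 => {[1]}
  | m + 1 => (twoLetterRGFs m).image (· ++ [1]) ∪ (twoLetterRGFs m).image (· ++ [2])

lemma append_singleton_mem_twoLetterRGFs_succ {m b : ℕ} {v : List ℕ} :
    v ++ [b] ∈ twoLetterRGFs (m + 1) ↔ v ∈ twoLetterRGFs m ∧ (b = 1 ∨ b = 2) := by
  simp [twoLetterRGFs, eq_comm, and_or_left]

lemma mem_twoLetterRGFs {m : ℕ} {w : List ℕ} :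
    w ∈ twoLetterRGFs m ↔ w.length = m + 1 ∧ w.getD 0 0 = 1 ∧ w ⊆ [1, 2] := by
  induction m generalizing w with
  | zero =>
    rcases w with _ | ⟨a, _ | ⟨b, t⟩⟩ <;> simp +contextual [twoLetterRGFs, eq_comm]
  | succ m ih =>
    rcases w.eq_nil_or_concat with rfl | ⟨v, b, rfl⟩
    · simp [twoLetterRGFs]
    rw [List.concat_eq_append, append_singleton_mem_twoLetterRGFs_succ, ih]
    by_cases hv : v.length = m + 1
    · rw [List.getD_append _ _ _ _ (by omega)]
      simp [hv, List.append_subset, and_assoc]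
    · simp [hv]

lemma sum_twoLetterRGFs_succ {M : Type*} [AddCommMonoid M] (m : ℕ) (f : List ℕ → M) :
    ∑ w ∈ twoLetterRGFs (m + 1), f w =
      ∑ w ∈ twoLetterRGFs m, f (w ++ [1]) + ∑ w ∈ twoLetterRGFs m, f (w ++ [2]) := by
  rw [twoLetterRGFs, sum_union (by simp [disjoint_left]), sum_image (by simp),
    sum_image (by simp)]

lemma one_mem_of_mem_twoLetterRGFs {m : ℕ} {w : List ℕ} (hw : w ∈ twoLetterRGFs m) :
    1 ∈ w := by
  obtain ⟨hl, h0, -⟩ := mem_twoLetterRGFs.mp hw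
  exact h0 ▸ getD_mem (by omega)

lemma replicate_mem_twoLetterRGFs (m : ℕ) : List.replicate (m + 1) 1 ∈ twoLetterRGFs m := by
  simp [mem_twoLetterRGFs, List.replicate_succ, List.subset_def, List.mem_replicate]

lemma eq_replicate_of_two_notMem {m : ℕ} {w : List ℕ} (hw : w ∈ twoLetterRGFs m)
    (h2 : 2 ∉ w) : w = List.replicate (m + 1) 1 := by
  obtain ⟨hl, -, hsub⟩ := mem_twoLetterRGFs.mp hw
  refine List.eq_replicate_iff.mpr ⟨hl, fun b hb => ?_⟩
  have := hsub hb
  simp only [List.mem_cons, List.not_mem_nil, or_false] at this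
  exact this.resolve_right (by rintro rfl; exact h2 hb)

lemma statLB_replicate_one (n : ℕ) : statLB (List.replicate n 1) = 0 := by
  refine sum_eq_zero fun j hj => card_eq_zero.mpr (filter_eq_empty_iff.mpr fun v hv => ?_)
  rw [List.eq_of_mem_replicate (List.mem_of_mem_take (List.mem_toFinset.mp hv)),
    List.eq_of_mem_replicate (getD_mem (mem_range.mp hj))]
  exact lt_irrefl 1

lemma append_singleton_subset {m b : ℕ} {w : List ℕ} (hw : w ∈ twoLetterRGFs m)
    (hb : b ∈ [1, 2]) : w ++ [b] ⊆ [1, 2] :=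
  List.append_subset.mpr
    ⟨(mem_twoLetterRGFs.mp hw).2.2, List.cons_subset.mpr ⟨hb, List.nil_subset _⟩⟩

lemma Rn_succ_eq_twoLetterRGFs (m : ℕ) : Rn (m + 1) [1, 2, 3] = ↑(twoLetterRGFs m) := by
  ext w
  simp only [Rn, Set.mem_ofPred_eq, mem_coe, mem_twoLetterRGFs]
  constructor
  · rintro ⟨hl, hrgf, hav⟩
    refine ⟨hl, hrgf.2.1 (by omega), fun a ha => ?_⟩
    have := hrgf.1 a ha
    have := le_two_of_isRGF hrgf hav a ha
    simp only [List.mem_cons, List.not_mem_nil, or_false]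
    omega
  · rintro ⟨hl, h0, hsub⟩
    exact ⟨hl, isRGF_of_subset (by omega) h0 hsub, not_containsPat_of_subset hsub⟩

lemma finsum_mem_Rn_succ {M : Type*} [AddCommMonoid M] (m : ℕ) (f : List ℕ → M) :
    ∑ᶠ w ∈ Rn (m + 1) [1, 2, 3], f w = ∑ w ∈ twoLetterRGFs m, f w := by
  rw [Rn_succ_eq_twoLetterRGFs, finsum_mem_coe_finset]

def leftStat (r : ℕ → ℕ → Prop) [DecidableRel r] (w : List ℕ) : ℕ :=
  ∑ j ∈ range w.length, ((w.take j).toFinset.filter (r (w.getD j 0))).card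

def rightStat (r : ℕ → ℕ → Prop) [DecidableRel r] (w : List ℕ) : ℕ :=
  ∑ j ∈ range w.length, ((w.drop (j + 1)).toFinset.filter (r (w.getD j 0))).card

lemma statLB_eq_leftStat : statLB = leftStat (· < ·) := rfl
lemma statLS_eq_leftStat : statLS = leftStat (· > ·) := rfl
lemma statRB_eq_rightStat : statRB = rightStat (· < ·) := rfl
lemma statRS_eq_rightStat : statRS = rightStat (· > ·) := rfl

lemma sum_range_ite_getD_eq_count (y : ℕ) :
    ∀ w : List ℕ, ∑ j ∈ range w.length, (if w.getD j 0 = y then 1 else 0) = w.count y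
  | [] => rfl
  | a :: w => by
    rw [List.length_cons, sum_range_succ', List.count_cons, ← sum_range_ite_getD_eq_count y w]
    simp [add_comm]

section Stats

variable (r : ℕ → ℕ → Prop) [DecidableRel r] (w : List ℕ) (x : ℕ)

lemma leftStat_append_singleton :
    leftStat r (w ++ [x]) = leftStat r w + (w.toFinset.filter (r x)).card := by
  rw [leftStat, List.length_append, List.length_singleton, sum_range_succ]
  congr 1
  · refine sum_congr rfl fun j hj => ?_
    rw [mem_range] at hj
    rw [List.take_append_of_le_length hj.le, List.getD_append _ _ _ _ hj]
  · rw [List.take_left, List.getD_append_right _ _ _ _ le_rfl]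
    simp

lemma rightStat_append_singleton :
    rightStat r (w ++ [x]) = ∑ j ∈ range w.length,
      ((insert x (w.drop (j + 1)).toFinset).filter (r (w.getD j 0))).card := by
  rw [rightStat, List.length_append, List.length_singleton, sum_range_succ]
  simp only [List.getD_append_right _ _ _ _ le_rfl, List.drop_eq_nil_of_le
    (show (w ++ [x]).length ≤ w.length + 1 by simp), List.toFinset_nil, filter_empty,
    card_empty, add_zero]
  refine sum_congr rfl fun j hj => ?_
  rw [mem_range] at hj
  rw [List.getD_append _ _ _ _ hj, List.drop_append_of_le_length hj, List.toFinset_append]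
  simp only [List.toFinset_cons, List.toFinset_nil, union_insert, union_empty]

end Stats

section SinglePair

variable {r : ℕ → ℕ → Prop} [DecidableRel r] {y z : ℕ} {w : List ℕ} {x : ℕ}

lemma card_filter_eq_ite {l : List ℕ} (hr : ∀ a ∈ l, ∀ b ∈ l, r a b ↔ a = y ∧ b = z)
    {a : ℕ} (ha : a ∈ l) {s : Finset ℕ} (hs : ∀ b ∈ s, b ∈ l) :
    (s.filter (r a)).card = if a = y ∧ z ∈ s then 1 else 0 := by
  rw [filter_congr fun b hb => hr a ha b (hs b hb)]
  by_cases hay : a = y <;> simp [hay, filter_eq', apply_ite card]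

lemma leftStat_append_singleton_eq
    (hr : ∀ a ∈ w ++ [x], ∀ b ∈ w ++ [x], r a b ↔ a = y ∧ b = z) :
    leftStat r (w ++ [x]) = leftStat r w + if x = y ∧ z ∈ w then 1 else 0 := by
  rw [leftStat_append_singleton, card_filter_eq_ite hr (by simp) (by simp +contextual)]
  simp

lemma rightStat_append_singleton_of_ne
    (hr : ∀ a ∈ w ++ [x], ∀ b ∈ w ++ [x], r a b ↔ a = y ∧ b = z) (hxz : x ≠ z) :
    rightStat r (w ++ [x]) = rightStat r w := by
  rw [rightStat_append_singleton, rightStat]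
  refine sum_congr rfl fun j hj => ?_
  have hj : w.getD j 0 ∈ w ++ [x] := List.mem_append_left _ (getD_mem (mem_range.mp hj))
  rw [filter_insert, if_neg fun h => hxz ((hr _ hj x (by simp)).mp h).2]

lemma rightStat_append_singleton_self
    (hr : ∀ a ∈ w ++ [z], ∀ b ∈ w ++ [z], r a b ↔ a = y ∧ b = z) :
    rightStat r (w ++ [z]) = w.count y := by
  rw [rightStat_append_singleton, ← sum_range_ite_getD_eq_count]
  refine sum_congr rfl fun j hj => ?_
  have hj : w.getD j 0 ∈ w ++ [z] := List.mem_append_left _ (getD_mem (mem_range.mp hj))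
  rw [card_filter_eq_ite hr hj]
  · simp
  · simp only [mem_insert, List.mem_toFinset]
    rintro b (rfl | hb)
    · simp
    · exact List.mem_append_left _ (List.mem_of_mem_drop hb)

end SinglePair

section TwoLetterWords

variable {w : List ℕ} {x : ℕ}

lemma lt_iff_of_subset (hw : w ⊆ [1, 2]) :
    ∀ a ∈ w, ∀ b ∈ w, a < b ↔ a = 1 ∧ b = 2 := by
  intro a ha b hb
  have := hw ha
  have := hw hb
  simp only [List.mem_cons, List.not_mem_nil, or_false] at *
  omega

lemma gt_iff_of_subset (hw : w ⊆ [1, 2]) :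
    ∀ a ∈ w, ∀ b ∈ w, a > b ↔ a = 2 ∧ b = 1 := by
  intro a ha b hb
  have := hw ha
  have := hw hb
  simp only [List.mem_cons, List.not_mem_nil, or_false] at *
  omega

lemma statLB_append_singleton (hw : w ++ [x] ⊆ [1, 2]) :
    statLB (w ++ [x]) = statLB w + if x = 1 ∧ 2 ∈ w then 1 else 0 :=
  leftStat_append_singleton_eq (lt_iff_of_subset hw)

lemma statLS_append_singleton (hw : w ++ [x] ⊆ [1, 2]) (h1 : 1 ∈ w) :
    statLS (w ++ [x]) = statLS w + if x = 2 then 1 else 0 := by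
  simp [statLS_eq_leftStat, leftStat_append_singleton_eq (gt_iff_of_subset hw), h1]

lemma statRB_append_one (hw : w ++ [1] ⊆ [1, 2]) : statRB (w ++ [1]) = statRB w :=
  rightStat_append_singleton_of_ne (lt_iff_of_subset hw) (by decide)

lemma statRB_append_two (hw : w ++ [2] ⊆ [1, 2]) : statRB (w ++ [2]) = w.count 1 :=
  rightStat_append_singleton_self (lt_iff_of_subset hw)

lemma statRS_append_two (hw : w ++ [2] ⊆ [1, 2]) : statRS (w ++ [2]) = statRS w :=
  rightStat_append_singleton_of_ne (gt_iff_of_subset hw) (by decide)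

lemma statRS_append_one (hw : w ++ [1] ⊆ [1, 2]) : statRS (w ++ [1]) = w.count 2 :=
  rightStat_append_singleton_self (gt_iff_of_subset hw)

end TwoLetterWords

section GeneratingFunctions

variable {R : Type*}

lemma sum_twoLetterRGFs_pow [CommSemiring R] (x : R) (s : List ℕ → ℕ) (d₁ d₂ : ℕ)
    (h₁ : ∀ m, ∀ w ∈ twoLetterRGFs m, s (w ++ [1]) = s w + d₁)
    (h₂ : ∀ m, ∀ w ∈ twoLetterRGFs m, s (w ++ [2]) = s w + d₂) (m : ℕ) :
    ∑ w ∈ twoLetterRGFs m, x ^ s w = x ^ s [1] * (x ^ d₁ + x ^ d₂) ^ m := by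
  induction m with
  | zero => simp [twoLetterRGFs]
  | succ m ih =>
    have e₁ : ∀ w ∈ twoLetterRGFs m, x ^ s (w ++ [1]) = x ^ s w * x ^ d₁ := fun w hw => by
      rw [h₁ m w hw, pow_add]
    have e₂ : ∀ w ∈ twoLetterRGFs m, x ^ s (w ++ [2]) = x ^ s w * x ^ d₂ := fun w hw => by
      rw [h₂ m w hw, pow_add]
    rw [sum_twoLetterRGFs_succ, sum_congr rfl e₁, sum_congr rfl e₂, ← sum_mul, ← sum_mul,
      ih]
    ring

lemma sum_pow_count_one [CommSemiring R] (x : R) (m : ℕ) :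
    ∑ w ∈ twoLetterRGFs m, x ^ w.count 1 = x * (x + 1) ^ m := by
  rw [sum_twoLetterRGFs_pow x (List.count 1) 1 0 (fun _ _ _ => List.count_append ..)
    (fun _ _ _ => List.count_append ..)]
  simp

lemma sum_pow_count_two [CommSemiring R] (x : R) (m : ℕ) :
    ∑ w ∈ twoLetterRGFs m, x ^ w.count 2 = (x + 1) ^ m := by
  rw [sum_twoLetterRGFs_pow x (List.count 2) 0 1 (fun _ _ _ => List.count_append ..)
    (fun _ _ _ => List.count_append ..)]
  simp [add_comm]

lemma sum_pow_statLS [CommSemiring R] (x : R) (m : ℕ) :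
    ∑ w ∈ twoLetterRGFs m, x ^ statLS w = (x + 1) ^ m := by
  rw [sum_twoLetterRGFs_pow x statLS 0 1
    (fun _ _ hw => statLS_append_singleton (append_singleton_subset hw (by simp))
      (one_mem_of_mem_twoLetterRGFs hw))
    (fun _ _ hw => statLS_append_singleton (append_singleton_subset hw (by simp))
      (one_mem_of_mem_twoLetterRGFs hw))]
  simp [add_comm, statLS_eq_leftStat, leftStat]

lemma sum_pow_statRB [CommSemiring R] (x : R) (m : ℕ) :
    ∑ w ∈ twoLetterRGFs m, x ^ statRB w = (x + 1) ^ m := by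
  induction m with
  | zero => simp [twoLetterRGFs, statRB_eq_rightStat, rightStat]
  | succ m ih =>
    have e₁ : ∀ w ∈ twoLetterRGFs m, x ^ statRB (w ++ [1]) = x ^ statRB w := fun w hw => by
      rw [statRB_append_one (append_singleton_subset hw (by simp))]
    have e₂ : ∀ w ∈ twoLetterRGFs m, x ^ statRB (w ++ [2]) = x ^ w.count 1 := fun w hw => by
      rw [statRB_append_two (append_singleton_subset hw (by simp))]
    rw [sum_twoLetterRGFs_succ, sum_congr rfl e₁, sum_congr rfl e₂, ih, sum_pow_count_one]
    ring

lemma mul_sum_pow_statRS [CommRing R] (x : R) (m : ℕ) :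
    x * ∑ w ∈ twoLetterRGFs m, x ^ statRS w = (x + 1) ^ m + x - 1 := by
  induction m with
  | zero => simp [twoLetterRGFs, statRS_eq_rightStat, rightStat]
  | succ m ih =>
    have e₁ : ∀ w ∈ twoLetterRGFs m, x ^ statRS (w ++ [1]) = x ^ w.count 2 := fun w hw => by
      rw [statRS_append_one (append_singleton_subset hw (by simp))]
    have e₂ : ∀ w ∈ twoLetterRGFs m, x ^ statRS (w ++ [2]) = x ^ statRS w := fun w hw => by
      rw [statRS_append_two (append_singleton_subset hw (by simp))]
    rw [sum_twoLetterRGFs_succ, sum_congr rfl e₁, sum_congr rfl e₂, sum_pow_count_two]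
    linear_combination ih

lemma mul_sum_pow_statLB [CommRing R] (x : R) (m : ℕ) :
    x * ∑ w ∈ twoLetterRGFs m, x ^ statLB w = (x + 1) ^ m + x - 1 := by
  induction m with
  | zero => simp [twoLetterRGFs, statLB_eq_leftStat, leftStat]
  | succ m ih =>
    have e₁ : ∀ w ∈ twoLetterRGFs m,
        x ^ statLB (w ++ [1]) = x ^ statLB w * x ^ (if 2 ∈ w then 1 else 0) := fun w hw => by
      rw [statLB_append_singleton (append_singleton_subset hw (by simp)), pow_add]
      simp
    have e₂ : ∀ w ∈ twoLetterRGFs m, x ^ statLB (w ++ [2]) = x ^ statLB w := fun w hw => by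
      rw [statLB_append_singleton (append_singleton_subset hw (by simp))]
      simp
    have hrep := replicate_mem_twoLetterRGFs m
    -- every word except `1 1 ⋯ 1` contains a `2`, and that word has `lb = 0`
    have hcontains_two : ∀ w ∈ (twoLetterRGFs m).erase (List.replicate (m + 1) 1),
        x ^ statLB w * x ^ (if 2 ∈ w then 1 else 0) = x * x ^ statLB w := fun w hw => by
      rw [if_pos, pow_one, mul_comm]
      by_contra h2
      exact ne_of_mem_erase hw (eq_replicate_of_two_notMem (mem_of_mem_erase hw) h2)
    have hsplit : ∑ w ∈ twoLetterRGFs m, x ^ statLB w * x ^ (if 2 ∈ w then 1 else 0) =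
        x * ∑ w ∈ twoLetterRGFs m, x ^ statLB w - x + 1 := by
      rw [← add_sum_erase _ _ hrep, sum_congr rfl hcontains_two, ← mul_sum,
        sum_erase_eq_sub hrep, statLB_replicate_one, if_neg (by simp [List.mem_replicate])]
      ring
    rw [sum_twoLetterRGFs_succ, sum_congr rfl e₁, sum_congr rfl e₂, hsplit]
    linear_combination (x + 1) * ih

lemma mul_one_add_sum_choose [CommRing R] (x : R) (m : ℕ) :
    x * (1 + ∑ k ∈ range m, (m.choose (k + 1) : R) * x ^ k) = (x + 1) ^ m + x - 1 := by
  have hterm : ∀ k ∈ range m, x * ((m.choose (k + 1) : R) * x ^ k) =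
      x ^ (k + 1) * 1 ^ (m - (k + 1)) * m.choose (k + 1) := fun k _ => by
    rw [one_pow]
    ring
  rw [add_pow, sum_range_succ', mul_add, mul_sum, sum_congr rfl hterm]
  simp only [pow_zero, one_pow, Nat.choose_zero_right, Nat.cast_one]
  ring

end GeneratingFunctions

open Polynomial

lemma LBp_succ (m : ℕ) :
    LBp (m + 1) [1, 2, 3] = 1 + ∑ k ∈ range m, (m.choose (k + 1) : ℤ[X]) * X ^ k :=
  mul_left_cancel₀ X_ne_zero <| by
    rw [LBp, finsum_mem_Rn_succ, mul_sum_pow_statLB, mul_one_add_sum_choose]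

lemma RSp_succ (m : ℕ) :
    RSp (m + 1) [1, 2, 3] = 1 + ∑ k ∈ range m, (m.choose (k + 1) : ℤ[X]) * X ^ k :=
  mul_left_cancel₀ X_ne_zero <| by
    rw [RSp, finsum_mem_Rn_succ, mul_sum_pow_statRS, mul_one_add_sum_choose]

lemma LSp_succ (m : ℕ) : LSp (m + 1) [1, 2, 3] = (X + 1) ^ m := by
  rw [LSp, finsum_mem_Rn_succ, sum_pow_statLS]

lemma RBp_succ (m : ℕ) : RBp (m + 1) [1, 2, 3] = (X + 1) ^ m := by
  rw [RBp, finsum_mem_Rn_succ, sum_pow_statRB]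

end SetPartition123
/-- `LB_n(1/2/3) = RS_n(1/2/3) = 1 + ∑_{k=0}^{n-2} C(n-1,k+1) q^k`
and `LS_n(1/2/3) = RB_n(1/2/3) = (r+1)^{n-1}`. -/
theorem stmt7 (n : ℕ) (hn : 1 ≤ n) :
    LBp n [1, 2, 3] = RSp n [1, 2, 3] ∧
    LBp n [1, 2, 3] =
      1 + ∑ k ∈ Finset.range (n - 1),
            ((n - 1).choose (k + 1) : Polynomial ℤ) * Polynomial.X ^ k ∧
    LSp n [1, 2, 3] = RBp n [1, 2, 3] ∧
    LSp n [1, 2, 3] = (Polynomial.X + 1) ^ (n - 1) := by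
  obtain ⟨m, rfl⟩ := Nat.exists_eq_add_of_le' hn
  rw [Nat.add_sub_cancel, SetPartition123.LBp_succ, SetPartition123.RSp_succ,
    SetPartition123.LSp_succ, SetPartition123.RBp_succ]
  exact ⟨rfl, rfl, rfl, rfl⟩
end

section
/- For every n ≥ 1 there exists a bijection φ from R_n(1/2/3) to itself such that lb(v) = rs(φ(v)) for all v ∈ R_n(1/2/3); explicitly, writing v = a_1 a_2 ⋯ a_n (a word of 1s and 2s starting with 1), one may take φ(v) = a_1 (3-a_n)(3-a_{n-1})⋯(3-a_3)(3-a_2). -/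
open Finset

namespace Stmt8Aux

lemma le_foldr_max {a : ℕ} {l : List ℕ} (h : a ∈ l) : a ≤ l.foldr max 0 := by
  induction l with
  | nil => simp at h
  | cons b t ih =>
    rcases List.mem_cons.1 h with rfl | h
    · exact le_max_left _ _
    · exact le_trans (ih h) (le_max_right _ _)

lemma foldr_max_mem (l : List ℕ) : l.foldr max 0 = 0 ∨ l.foldr max 0 ∈ l := by
  induction l with
  | nil => left; rfl
  | cons a t ih =>
    rcases le_or_gt (t.foldr max 0) a with h | h
    · right; simp [List.foldr_cons, max_eq_left h]
    · have : (a :: t).foldr max 0 = t.foldr max 0 := by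
        simp [max_eq_right (le_of_lt h)]
      rw [this]
      rcases ih with h0 | hm
      · omega
      · right; exact List.mem_cons_of_mem _ hm

/-- In an RGF, every value `c` with `1 ≤ c ≤ w[p]` occurs at a position `≤ p`. -/
lemma rgf_exists (w : List ℕ) (h : IsRGF w) :
    ∀ p, p < w.length → ∀ c, 1 ≤ c → ∀ (hp : p < w.length), c ≤ w[p] →
      ∃ q, ∃ hq : q < w.length, q ≤ p ∧ w[q] = c := by
  intro p
  induction p using Nat.strong_induction_on with
  | _ p ih =>
    intro hp c hc hp' hcle
    rcases eq_or_lt_of_le hcle with heq | hlt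
    · exact ⟨p, hp, le_rfl, heq.symm⟩
    · -- w[p] > c ≥ 1, so p > 0
      have h0 : 0 < w.length := lt_of_le_of_lt (Nat.zero_le p) hp
      have hw0 : w[0] = 1 := by
        have := h.2.1 h0
        rwa [List.getD_eq_getElem _ _ h0] at this
      rcases Nat.eq_zero_or_pos p with rfl | hppos
      · omega
      · obtain ⟨j, rfl⟩ : ∃ j, p = j + 1 := ⟨p - 1, by omega⟩
        have hrg := h.2.2 j hp
        rw [List.getD_eq_getElem _ _ hp] at hrg
        have hmax : c ≤ (w.take (j+1)).foldr max 0 := by omega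
        rcases foldr_max_mem (w.take (j+1)) with hz | hm
        · omega
        · obtain ⟨i, hi, hieq⟩ := List.getElem_of_mem hm
          rw [List.length_take] at hi
          have hij : i ≤ j := by omega
          have hi' : i < w.length := by omega
          rw [List.getElem_take] at hieq
          have hci : c ≤ w[i] := hieq ▸ hmax
          obtain ⟨q, hq, hqi, hqc⟩ := ih i (by omega) hi' c hc hi' hci
          exact ⟨q, hq, by omega, hqc⟩

lemma mem_Rn_iff {n : ℕ} (hn : 1 ≤ n) (w : List ℕ) :
    w ∈ Rn n [1,2,3] ↔
      ∃ t : List ℕ, w = 1 :: t ∧ t.length + 1 = n ∧ ∀ a ∈ t, a = 1 ∨ a = 2 := by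
  constructor
  · rintro ⟨hlen, hrgf, hav⟩
    have h0 : 0 < w.length := by omega
    have hw0 : w[0] = 1 := by
      have := hrgf.2.1 h0
      rwa [List.getD_eq_getElem _ _ h0] at this
    -- all letters are 1 or 2
    have hall : ∀ a ∈ w, a = 1 ∨ a = 2 := by
      intro a ha
      have h1 : 1 ≤ a := hrgf.1 a ha
      by_contra hcon
      push_neg at hcon
      have ha3 : 3 ≤ a := by omega
      obtain ⟨p, hp, hpa⟩ := List.getElem_of_mem ha
      obtain ⟨q, hq, hqp, hq2⟩ := rgf_exists w hrgf p hp 2 (by omega) hp (by omega)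
      have hq0 : 0 < q := by
        rcases Nat.eq_zero_or_pos q with rfl | h
        · rw [hw0] at hq2; omega
        · exact h
      have hqp' : q < p := by
        rcases eq_or_lt_of_le hqp with rfl | h
        · rw [hpa] at hq2; omega
        · exact h
      apply hav
      refine ⟨![⟨0, h0⟩, ⟨q, hq⟩, ⟨p, hp⟩], ?_, ?_⟩
      · intro a b hab
        fin_cases a <;> fin_cases b <;>
          simp_all [Fin.mk_lt_mk, Fin.lt_def] <;> omega
      · intro a b
        fin_cases a <;> fin_cases b <;>
          simp_all [List.get_eq_getElem] <;> omega
    refine ⟨w.tail, ?_, ?_, ?_⟩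
    · cases w with
      | nil => simp at h0
      | cons b t => simpa using hw0 ▸ rfl
    · cases w with
      | nil => simp at h0
      | cons b t => simpa using hlen
    · intro a ha
      exact hall a (List.mem_of_mem_tail ha)
  · rintro ⟨t, rfl, hlen, ht⟩
    have hall : ∀ a ∈ (1 :: t), a = 1 ∨ a = 2 := by
      intro a ha
      rcases List.mem_cons.1 ha with rfl | h
      · left; rfl
      · exact ht a h
    refine ⟨by simpa using hlen, ⟨?_, ?_, ?_⟩, ?_⟩
    · intro a ha; rcases hall a ha with rfl | rfl <;> omega
    · intro _; rfl
    · intro j hj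
      have hmem : (1 :: t).getD (j+1) 0 ∈ (1 :: t) := by
        rw [List.getD_eq_getElem _ _ hj]
        exact List.getElem_mem _
      have h2 : (1 :: t).getD (j+1) 0 ≤ 2 := by
        rcases hall _ hmem with h | h <;> omega
      have h1mem : (1 : ℕ) ∈ (1 :: t).take (j+1) := by
        rw [List.take_succ_cons]
        exact List.mem_cons_self
      have := le_foldr_max h1mem
      omega
    · rintro ⟨f, hmono, hiff⟩
      have hlen3 : ([1,2,3] : List ℕ).length = 3 := rfl
      have h01 : (1 :: t).get (f ⟨0, by omega⟩) ≠ (1 :: t).get (f ⟨1, by omega⟩) :=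
        fun h => by simpa using (hiff _ _).1 h
      have h02 : (1 :: t).get (f ⟨0, by omega⟩) ≠ (1 :: t).get (f ⟨2, by omega⟩) :=
        fun h => by simpa using (hiff _ _).1 h
      have h12 : (1 :: t).get (f ⟨1, by omega⟩) ≠ (1 :: t).get (f ⟨2, by omega⟩) :=
        fun h => by simpa using (hiff _ _).1 h
      have hv : ∀ i : Fin ([1,2,3] : List ℕ).length,
          (1 :: t).get (f i) = 1 ∨ (1 :: t).get (f i) = 2 := by
        intro i
        apply hall
        rw [List.get_eq_getElem]
        exact List.getElem_mem _
      rcases hv ⟨0, by omega⟩ with h | h <;> rcases hv ⟨1, by omega⟩ with h' | h' <;>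
        rcases hv ⟨2, by omega⟩ with h'' | h'' <;> omega

lemma statLB_cons (t : List ℕ) :
    statLB (1 :: t) = ∑ j ∈ range t.length,
      ((1 :: t.take j).toFinset.filter (fun v => t.getD j 0 < v)).card := by
  unfold statLB
  rw [List.length_cons, Finset.sum_range_succ']
  simp [List.take_succ_cons, List.getD_cons_succ]

lemma statRS_cons (s : List ℕ) (h1 : ∀ a ∈ s, 1 ≤ a) :
    statRS (1 :: s) = ∑ j ∈ range s.length,
      ((s.drop (j+1)).toFinset.filter (fun v => v < s.getD j 0)).card := by
  unfold statRS
  rw [List.length_cons, Finset.sum_range_succ']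
  have h0 : (((1::s).drop (0+1)).toFinset.filter (fun v => v < (1::s).getD 0 0)).card = 0 := by
    simp only [List.drop_succ_cons, List.drop_zero, List.getD_cons_zero]
    rw [Finset.card_eq_zero, Finset.filter_eq_empty_iff]
    intro x hx
    have := h1 x (List.mem_toFinset.1 hx)
    omega
  rw [h0, add_zero]
  apply Finset.sum_congr rfl
  intro j hj
  simp [List.getD_cons_succ, List.drop_succ_cons]

lemma cardA (t : List ℕ) (ht : ∀ a ∈ t, a = 1 ∨ a = 2) (j : ℕ) (hj : j < t.length) :
    ((1 :: t.take j).toFinset.filter (fun v => t.getD j 0 < v)).card =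
      if t.getD j 0 = 1 ∧ 2 ∈ t.take j then 1 else 0 := by
  have htj : t.getD j 0 = 1 ∨ t.getD j 0 = 2 := by
    apply ht
    rw [List.getD_eq_getElem _ _ hj]
    exact List.getElem_mem _
  have htake : ∀ a ∈ t.take j, a = 1 ∨ a = 2 := fun a ha => ht a (List.mem_of_mem_take ha)
  by_cases hc : t.getD j 0 = 1 ∧ 2 ∈ t.take j
  · rw [if_pos hc]
    have heq : ((1 :: t.take j).toFinset.filter (fun v => t.getD j 0 < v)) = {2} := by
      ext x
      simp only [Finset.mem_filter, List.mem_toFinset, List.mem_cons, Finset.mem_singleton]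
      constructor
      · rintro ⟨hx | hx, hlt⟩
        · omega
        · rcases htake x hx with rfl | rfl <;> omega
      · rintro rfl
        exact ⟨Or.inr hc.2, by omega⟩
    rw [heq, Finset.card_singleton]
  · rw [if_neg hc, Finset.card_eq_zero, Finset.filter_eq_empty_iff]
    intro x hx
    rcases List.mem_cons.1 (List.mem_toFinset.1 hx) with rfl | hx'
    · rcases htj with h | h <;> omega
    · rcases htake x hx' with rfl | rfl
      · rcases htj with h | h <;> omega
      · rcases htj with h | h
        · exact fun hlt => hc ⟨h, hx'⟩
        · omega

lemma cardB (s : List ℕ) (hs : ∀ a ∈ s, a = 1 ∨ a = 2) (j : ℕ) (hj : j < s.length) :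
    ((s.drop (j+1)).toFinset.filter (fun v => v < s.getD j 0)).card =
      if s.getD j 0 = 2 ∧ 1 ∈ s.drop (j+1) then 1 else 0 := by
  have hsj : s.getD j 0 = 1 ∨ s.getD j 0 = 2 := by
    apply hs
    rw [List.getD_eq_getElem _ _ hj]
    exact List.getElem_mem _
  have hdrop : ∀ a ∈ s.drop (j+1), a = 1 ∨ a = 2 := fun a ha => hs a (List.mem_of_mem_drop ha)
  by_cases hc : s.getD j 0 = 2 ∧ 1 ∈ s.drop (j+1)
  · rw [if_pos hc]
    have heq : ((s.drop (j+1)).toFinset.filter (fun v => v < s.getD j 0)) = {1} := by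
      ext x
      simp only [Finset.mem_filter, List.mem_toFinset, Finset.mem_singleton]
      constructor
      · rintro ⟨hx, hlt⟩
        rcases hdrop x hx with rfl | rfl <;> omega
      · rintro rfl
        exact ⟨hc.2, by omega⟩
    rw [heq, Finset.card_singleton]
  · rw [if_neg hc, Finset.card_eq_zero, Finset.filter_eq_empty_iff]
    intro x hx
    have hx' := List.mem_toFinset.1 hx
    rcases hdrop x hx' with rfl | rfl
    · rcases hsj with h | h
      · omega
      · exact fun hlt => hc ⟨h, hx'⟩
    · rcases hsj with h | h <;> omega

lemma stat_main (t : List ℕ) (ht : ∀ a ∈ t, a = 1 ∨ a = 2) :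
    statLB (1 :: t) = statRS (1 :: (t.reverse.map (fun a => 3 - a))) := by
  set m := t.length with hm
  set s : List ℕ := t.reverse.map (fun a => 3 - a) with hsdef
  have hslen : s.length = m := by simp [hsdef, hm]
  have hsel : ∀ a ∈ s, a = 1 ∨ a = 2 := by
    intro a ha
    rw [hsdef, List.mem_map] at ha
    obtain ⟨b, hb, rfl⟩ := ha
    rcases ht b (List.mem_reverse.1 hb) with rfl | rfl
    · right; rfl
    · left; rfl
  rw [statLB_cons t, statRS_cons s (fun a ha => by rcases hsel a ha with rfl | rfl <;> omega)]
  have hLB : ∀ j ∈ range m, ((1 :: t.take j).toFinset.filter (fun v => t.getD j 0 < v)).card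
      = if t.getD j 0 = 1 ∧ 2 ∈ t.take j then 1 else 0 := by
    intro j hj
    exact cardA t ht j (Finset.mem_range.1 hj)
  have hRS : ∀ j ∈ range m, ((s.drop (j+1)).toFinset.filter (fun v => v < s.getD j 0)).card
      = if s.getD j 0 = 2 ∧ 1 ∈ s.drop (j+1) then 1 else 0 := by
    intro j hj
    exact cardB s hsel j (by rw [hslen]; exact Finset.mem_range.1 hj)
  rw [Finset.sum_congr rfl hLB, hslen,
    Finset.sum_congr rfl hRS,
    ← Finset.sum_range_reflect (fun j => if s.getD j 0 = 2 ∧ 1 ∈ s.drop (j+1) then 1 else 0) m]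
  apply Finset.sum_congr rfl
  intro j hj
  have hjm : j < m := Finset.mem_range.1 hj
  have h1 : m - 1 - j < s.length := by omega
  have hval : s.getD (m - 1 - j) 0 = 3 - t.getD j 0 := by
    rw [List.getD_eq_getElem _ _ h1, List.getD_eq_getElem _ _ hjm]
    show (t.reverse.map (fun a => 3 - a))[m - 1 - j]'(by simp only [List.length_map, List.length_reverse]; omega) = 3 - t[j]
    rw [List.getElem_map, List.getElem_reverse]
    simp only [show t.length - 1 - (m - 1 - j) = j from by omega]
  have hdrop : s.drop (m - 1 - j + 1) = ((t.take j).map (fun a => 3 - a)).reverse := by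
    have : m - 1 - j + 1 = m - j := by omega
    rw [this, hsdef, List.map_reverse, List.drop_reverse]
    congr 1
    rw [← List.map_take]
    congr 1
    simp [hm]
    omega
  have hmem : (1 ∈ s.drop (m - 1 - j + 1)) ↔ 2 ∈ t.take j := by
    rw [hdrop, List.mem_reverse, List.mem_map]
    constructor
    · rintro ⟨b, hb, hb1⟩
      rcases ht b (List.mem_of_mem_take hb) with rfl | rfl
      · omega
      · exact hb
    · intro h2
      exact ⟨2, h2, rfl⟩
  have htj : t.getD j 0 = 1 ∨ t.getD j 0 = 2 := by
    apply ht
    rw [List.getD_eq_getElem _ _ hjm]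
    exact List.getElem_mem _
  rw [hval]
  rcases htj with h | h <;> rw [h] <;> simp [hmem]

lemma map33 (t : List ℕ) (ht : ∀ a ∈ t, a = 1 ∨ a = 2) :
    (t.map (fun a => 3 - a)).map (fun a => 3 - a) = t := by
  induction t with
  | nil => rfl
  | cons a t ih =>
    simp only [List.map_cons]
    rw [ih (fun b hb => ht b (List.mem_cons_of_mem _ hb))]
    rcases ht a List.mem_cons_self with rfl | rfl <;> rfl

def Fmap (w : List ℕ) : List ℕ := w.take 1 ++ (w.drop 1).reverse.map (fun a => 3 - a)

lemma Fmap_cons (a : ℕ) (t : List ℕ) :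
    Fmap (a :: t) = a :: t.reverse.map (fun b => 3 - b) := by
  simp [Fmap]

lemma Fmap_mem {n : ℕ} (hn : 1 ≤ n) {w : List ℕ} (h : w ∈ Rn n [1,2,3]) :
    Fmap w ∈ Rn n [1,2,3] := by
  obtain ⟨t, rfl, hlen, ht⟩ := (mem_Rn_iff hn w).1 h
  rw [Fmap_cons]
  refine (mem_Rn_iff hn _).2 ⟨t.reverse.map (fun b => 3 - b), rfl, by simpa using hlen, ?_⟩
  intro a ha
  rw [List.mem_map] at ha
  obtain ⟨b, hb, rfl⟩ := ha
  rcases ht b (List.mem_reverse.1 hb) with rfl | rfl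
  · right; rfl
  · left; rfl

lemma Fmap_invol {n : ℕ} (hn : 1 ≤ n) {w : List ℕ} (h : w ∈ Rn n [1,2,3]) :
    Fmap (Fmap w) = w := by
  obtain ⟨t, rfl, hlen, ht⟩ := (mem_Rn_iff hn w).1 h
  rw [Fmap_cons, Fmap_cons]
  congr 1
  simp only [List.map_reverse, List.reverse_reverse]
  exact map33 t ht

end Stmt8Aux

/-- an explicit bijection `φ` of `R_n(1/2/3)` taking `lb` to
`rs`:  `φ(a₁a₂⋯aₙ) = a₁(3-aₙ)(3-a_{n-1})⋯(3-a₂)`. -/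
theorem stmt8 (n : ℕ) (hn : 1 ≤ n) :
    ∃ φ : {v // v ∈ Rn n [1, 2, 3]} → {v // v ∈ Rn n [1, 2, 3]},
      Function.Bijective φ ∧
      (∀ v : {v // v ∈ Rn n [1, 2, 3]}, statLB v.val = statRS (φ v).val) ∧
      (∀ v : {v // v ∈ Rn n [1, 2, 3]},
        (φ v).val = v.val.take 1 ++ (v.val.drop 1).reverse.map fun a => 3 - a) := by
  refine ⟨fun v => ⟨Stmt8Aux.Fmap v.val, Stmt8Aux.Fmap_mem hn v.2⟩, ?_, ?_, ?_⟩
  · have hinv : Function.Involutive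
        (fun v : {v // v ∈ Rn n [1,2,3]} =>
          (⟨Stmt8Aux.Fmap v.val, Stmt8Aux.Fmap_mem hn v.2⟩ : {v // v ∈ Rn n [1,2,3]})) := by
      intro v
      exact Subtype.ext (Stmt8Aux.Fmap_invol hn v.2)
    exact hinv.bijective
  · intro v
    obtain ⟨t, hv, hlen, ht⟩ := (Stmt8Aux.mem_Rn_iff hn v.val).1 v.2
    show statLB v.val = statRS (Stmt8Aux.Fmap v.val)
    rw [hv]
    simp only [Stmt8Aux.Fmap_cons]
    exact Stmt8Aux.stat_main t ht
  · intro v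
    rfl
end

section
/- For every n ≥ 1: LB_n(13/2; q) = 2^{n-1} = RS_n(13/2; q) (constant polynomials), and LS_n(13/2; q) = ∏_{i=1}^{n-1} (1 + q^i) = RB_n(13/2; q). -/
open Finset

/-!
Avoiding `13/2` forces an RGF to be weakly increasing, so the avoiders of length `n` are the
staircases `a_j = 1 + #{i ∈ S | i < j}` (positions counted from `0`) for the ascent sets
`S ⊆ {0, …, n - 2}`. A staircase has no bigger letter to the left and no smaller letter to the
right of any position, so `lb = rs = 0`. Its prefix before position `j` takes exactly the values
`1, …, a_j - 1` below `a_j`, and its suffix after `j` exactly the values from `a_j + 1` up to the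
last letter; double counting then shows that an ascent at `i` contributes `n - 1 - i` to `ls` and
`i + 1` to `rb`, and summing `q ^ ∑_{i ∈ S} c_i` over all `S` gives `∏ (1 + q ^ c_i)`.
-/

section UnitSteps

variable {g : ℕ → ℕ}

theorem image_Icc_eq_Icc_of_unit_steps (hmono : Monotone g) (hstep : ∀ i, g (i + 1) ≤ g i + 1)
    {a b : ℕ} (hab : a ≤ b) : (Icc a b).image g = Icc (g a) (g b) := by
  induction b, hab using Nat.le_induction with
  | base => simp
  | succ b hab ih =>
    have hab' := hmono hab
    rw [← insert_Icc_right_eq_Icc_add_one (by omega), image_insert, ih]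
    obtain h | h : g (b + 1) = g b ∨ g (b + 1) = g b + 1 := by
      have : g b ≤ g (b + 1) := hmono (by omega)
      have := hstep b
      omega
    · rw [h, insert_eq_of_mem (right_mem_Icc.2 hab')]
    · rw [h, insert_Icc_right_eq_Icc_add_one (by omega)]

theorem filter_lt_image_range (hmono : Monotone g) (hstep : ∀ i, g (i + 1) ≤ g i + 1) (j : ℕ) :
    ((range j).image g).filter (· < g j) = Ico (g 0) (g j) := by
  cases j with
  | zero => simp
  | succ k =>
    rw [range_eq_Ico, Ico_add_one_right_eq_Icc,
      image_Icc_eq_Icc_of_unit_steps hmono hstep k.zero_le]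
    have : g k ≤ g (k + 1) := hmono (by omega)
    have : g (k + 1) ≤ g k + 1 := hstep k
    ext v
    simp only [mem_filter, mem_Icc, mem_Ico]
    omega

theorem filter_gt_image_Ico (hmono : Monotone g) (hstep : ∀ i, g (i + 1) ≤ g i + 1)
    {j n : ℕ} (hj : j < n) :
    ((Ico (j + 1) n).image g).filter (g j < ·) = Ioc (g j) (g (n - 1)) := by
  obtain ⟨m, rfl⟩ : ∃ m, n = m + 1 := ⟨n - 1, by omega⟩
  rw [Ico_add_one_right_eq_Icc, Nat.add_sub_cancel]
  rcases Nat.lt_or_ge j m with hjm | hjm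
  · rw [image_Icc_eq_Icc_of_unit_steps hmono hstep (a := j + 1) (by omega)]
    have : g (j + 1) ≤ g j + 1 := hstep j
    ext v
    simp only [mem_filter, mem_Icc, mem_Ioc]
    omega
  · obtain rfl : j = m := by omega
    simp

theorem filter_gt_image_range_eq_empty (hmono : Monotone g) (j : ℕ) :
    ((range j).image g).filter (g j < ·) = ∅ := by
  simp only [filter_eq_empty_iff, mem_image, mem_range]
  rintro _ ⟨i, hi, rfl⟩
  exact not_lt.2 (hmono hi.le)

theorem filter_lt_image_Ico_eq_empty (hmono : Monotone g) (j n : ℕ) :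
    ((Ico (j + 1) n).image g).filter (· < g j) = ∅ := by
  simp only [filter_eq_empty_iff, mem_image, mem_Ico]
  rintro _ ⟨i, hi, rfl⟩
  exact not_lt.2 (hmono (by omega))

end UnitSteps

section WordsOfFunctions

variable (g : ℕ → ℕ) (n : ℕ)

theorem getD_map_range {j : ℕ} (hj : j < n) : ((List.range n).map g).getD j 0 = g j := by
  simp [hj]

theorem toFinset_take_map_range {j : ℕ} (hj : j ≤ n) :
    (((List.range n).map g).take j).toFinset = (range j).image g := by
  ext v
  simp [← List.map_take, List.take_range, hj]

theorem toFinset_drop_map_range (k : ℕ) :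
    (((List.range n).map g).drop k).toFinset = (Ico k n).image g := by
  ext v
  simp only [← List.map_drop, List.mem_toFinset, List.mem_map, List.mem_drop_iff_getElem,
    List.length_range, List.getElem_range, mem_image, mem_Ico]
  constructor
  · rintro ⟨_, ⟨i, hi, rfl⟩, rfl⟩
    exact ⟨k + i, ⟨by omega, by omega⟩, rfl⟩
  · rintro ⟨i, ⟨hki, hin⟩, rfl⟩
    exact ⟨i, ⟨i - k, by omega, by rw [Nat.add_sub_cancel' hki]⟩, rfl⟩

variable {g}

theorem statLB_map_range (hmono : Monotone g) : statLB ((List.range n).map g) = 0 := by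
  refine sum_eq_zero fun j hj => ?_
  rw [List.length_map, List.length_range, mem_range] at hj
  rw [getD_map_range g n hj, toFinset_take_map_range g n hj.le,
    filter_gt_image_range_eq_empty hmono, card_empty]

theorem statRS_map_range (hmono : Monotone g) : statRS ((List.range n).map g) = 0 := by
  refine sum_eq_zero fun j hj => ?_
  rw [List.length_map, List.length_range, mem_range] at hj
  rw [getD_map_range g n hj, toFinset_drop_map_range,
    filter_lt_image_Ico_eq_empty hmono, card_empty]

theorem statLS_map_range (hmono : Monotone g) (hstep : ∀ i, g (i + 1) ≤ g i + 1) :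
    statLS ((List.range n).map g) = ∑ j ∈ range n, (g j - g 0) := by
  unfold statLS
  rw [List.length_map, List.length_range]
  refine sum_congr rfl fun j hj => ?_
  rw [mem_range] at hj
  rw [getD_map_range g n hj, toFinset_take_map_range g n hj.le,
    filter_lt_image_range hmono hstep, Nat.card_Ico]

theorem statRB_map_range (hmono : Monotone g) (hstep : ∀ i, g (i + 1) ≤ g i + 1) :
    statRB ((List.range n).map g) = ∑ j ∈ range n, (g (n - 1) - g j) := by
  unfold statRB
  rw [List.length_map, List.length_range]
  refine sum_congr rfl fun j hj => ?_
  rw [mem_range] at hj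
  rw [getD_map_range g n hj, toFinset_drop_map_range,
    filter_gt_image_Ico hmono hstep hj, Nat.card_Ioc]

end WordsOfFunctions

section Staircase

variable (S : Finset ℕ)

def staircase (j : ℕ) : ℕ := 1 + #{i ∈ S | i < j}

theorem staircase_zero : staircase S 0 = 1 := by simp [staircase]

theorem staircase_succ (j : ℕ) :
    staircase S (j + 1) = staircase S j + if j ∈ S then 1 else 0 := by
  have hsplit : ({i ∈ S | i < j + 1} : Finset ℕ) = {i ∈ S | i < j} ∪ {i ∈ S | i = j} := by
    rw [← filter_or]
    exact filter_congr fun i _ => Nat.lt_succ_iff_lt_or_eq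
  have hdisj : Disjoint ({i ∈ S | i < j} : Finset ℕ) {i ∈ S | i = j} :=
    disjoint_filter.2 fun i _ hlt heq => hlt.ne heq
  rw [staircase, staircase, hsplit, card_union_of_disjoint hdisj, filter_eq']
  split_ifs <;> simp [add_assoc]

theorem staircase_monotone : Monotone (staircase S) :=
  monotone_nat_of_le_succ fun j => by rw [staircase_succ]; omega

theorem staircase_succ_le (j : ℕ) : staircase S (j + 1) ≤ staircase S j + 1 := by
  rw [staircase_succ]; split_ifs <;> omega

theorem mem_iff_staircase_succ (j : ℕ) : j ∈ S ↔ staircase S (j + 1) = staircase S j + 1 := by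
  rw [staircase_succ]; split_ifs with h <;> simp [h]

def staircaseWord (n : ℕ) (S : Finset ℕ) : List ℕ := (List.range n).map (staircase S)

theorem staircaseWord_statLB (n : ℕ) : statLB (staircaseWord n S) = 0 :=
  statLB_map_range n (staircase_monotone S)

theorem staircaseWord_statRS (n : ℕ) : statRS (staircaseWord n S) = 0 :=
  statRS_map_range n (staircase_monotone S)

theorem staircaseWord_statLS (n : ℕ) :
    statLS (staircaseWord n S) = ∑ i ∈ S, (n - 1 - i) := by
  rw [staircaseWord, statLS_map_range n (staircase_monotone S) (staircase_succ_le S)]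
  calc ∑ j ∈ range n, (staircase S j - staircase S 0)
      = ∑ j ∈ range n, #(S.bipartiteBelow (· < ·) j) := by
        simp [staircase, bipartiteBelow]
    _ = ∑ i ∈ S, #((range n).bipartiteAbove (· < ·) i) :=
        (sum_card_bipartiteAbove_eq_sum_card_bipartiteBelow _).symm
    _ = ∑ i ∈ S, (n - 1 - i) := by
        refine sum_congr rfl fun i _ => ?_
        rw [bipartiteAbove, show {j ∈ range n | i < j} = Ioo i n by ext; simp [and_comm],
          Nat.card_Ioo]
        omega

theorem staircaseWord_statRB {n : ℕ} (hS : S ⊆ range (n - 1)) :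
    statRB (staircaseWord n S) = ∑ i ∈ S, (i + 1) := by
  rw [staircaseWord, statRB_map_range n (staircase_monotone S) (staircase_succ_le S)]
  have hS' : ({i ∈ S | i < n - 1} : Finset ℕ) = S :=
    filter_true_of_mem fun i hi => mem_range.1 (hS hi)
  calc ∑ j ∈ range n, (staircase S (n - 1) - staircase S j)
      = ∑ j ∈ range n, #(S.bipartiteBelow (fun i j => j ≤ i) j) := by
        refine sum_congr rfl fun j _ => ?_
        have := card_filter_add_card_filter_not (s := S) (· < j)
        simp only [staircase, hS', bipartiteBelow, not_lt] at this ⊢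
        omega
    _ = ∑ i ∈ S, #((range n).bipartiteAbove (fun i j => j ≤ i) i) :=
        (sum_card_bipartiteAbove_eq_sum_card_bipartiteBelow _).symm
    _ = ∑ i ∈ S, (i + 1) := by
        refine sum_congr rfl fun i hi => ?_
        have := mem_range.1 (hS hi)
        rw [bipartiteAbove, show {j ∈ range n | j ≤ i} = range (i + 1) by ext; simp; omega,
          card_range]

end Staircase

section Pattern121

variable {w : List ℕ}

theorem IsRGF.one_le_getD_s12 (hw : IsRGF w) {j : ℕ} (hj : j < w.length) : 1 ≤ w.getD j 0 := by
  rw [List.getD_eq_getElem _ _ hj]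
  exact hw.1 _ (List.getElem_mem hj)

theorem IsRGF.getD_succ_le (hw : IsRGF w) {j b : ℕ} (hj : j + 1 < w.length)
    (hb : ∀ i ≤ j, w.getD i 0 ≤ b) : w.getD (j + 1) 0 ≤ b + 1 := by
  have hmax : (w.take (j + 1)).foldr max 0 ≤ b := List.max_le_of_forall_le _ _ fun x hx => by
    obtain ⟨i, hi, rfl⟩ := List.mem_take_iff_getElem.1 hx
    rw [← List.getD_eq_getElem _ 0]
    exact hb i (by omega)
  have := hw.2.2 j hj
  omega

theorem containsPat_121_of_lt {i₀ i j : ℕ} (h₀ : i₀ < i) (h₁ : i < j) (hj : j < w.length)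
    (heq : w.getD i₀ 0 = w.getD j 0) (hne : w.getD i₀ 0 ≠ w.getD i 0) :
    ContainsPat w [1, 2, 1] := by
  rw [List.getD_eq_getElem _ _ (by omega), List.getD_eq_getElem _ _ hj] at heq
  rw [List.getD_eq_getElem _ _ (by omega), List.getD_eq_getElem _ _ (by omega)] at hne
  refine ⟨![⟨i₀, by omega⟩, ⟨i, by omega⟩, ⟨j, hj⟩], ?_, ?_⟩
  · refine Fin.strictMono_iff_lt_succ.2 fun k => ?_
    fin_cases k <;> simpa [Fin.lt_def]
  · intro a b
    fin_cases a <;> fin_cases b <;> simp [List.get] <;> omega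

theorem not_containsPat_121_of_monotone
    (hmono : ∀ i j, i ≤ j → j < w.length → w.getD i 0 ≤ w.getD j 0) :
    ¬ ContainsPat w [1, 2, 1] := by
  rintro ⟨f, hf, hpat⟩
  have h₀₁ : f 0 < f 1 := hf (by decide)
  have h₁₂ : f 1 < f 2 := hf (by decide)
  have heq := (hpat 0 2).2 rfl
  have hne := mt (hpat 0 1).1 (by decide)
  simp only [List.get_eq_getElem, ← List.getD_eq_getElem _ 0] at heq hne
  have := hmono _ _ h₀₁.le (f 1).isLt
  have := hmono _ _ h₁₂.le (f 2).isLt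
  omega

-- A drop below `a_j` would land on a value already taken at some `i < j`: pattern at `i, j, j + 1`.
theorem getD_succ_of_not_containsPat_121 (hw : IsRGF w) (hav : ¬ ContainsPat w [1, 2, 1])
    {j : ℕ} (hj : j + 1 < w.length) (hle : ∀ i ≤ j, w.getD i 0 ≤ w.getD j 0)
    (hsurj : ∀ v ∈ Icc 1 (w.getD j 0), ∃ i ≤ j, w.getD i 0 = v) :
    w.getD j 0 ≤ w.getD (j + 1) 0 ∧ w.getD (j + 1) 0 ≤ w.getD j 0 + 1 := by
  refine ⟨?_, hw.getD_succ_le hj hle⟩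
  by_contra! hlt
  obtain ⟨i, hij, hi⟩ := hsurj _ (mem_Icc.2 ⟨hw.one_le_getD_s12 hj, hlt.le⟩)
  have hne : i ≠ j := by rintro rfl; omega
  exact hav (containsPat_121_of_lt (lt_of_le_of_ne hij hne) j.lt_succ_self hj hi (by omega))

end Pattern121

section Avoiders

variable {n : ℕ} {S : Finset ℕ}

@[simp]
theorem length_staircaseWord : (staircaseWord n S).length = n := by simp [staircaseWord]

theorem staircaseWord_isRGF : IsRGF (staircaseWord n S) := by
  refine ⟨?_, fun hn => ?_, fun j hj => ?_⟩
  · simp [staircaseWord, staircase]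
  · rw [length_staircaseWord] at hn
    rw [staircaseWord, getD_map_range _ n hn, staircase_zero]
  · rw [length_staircaseWord] at hj
    rw [staircaseWord]
    have hmem : staircase S j ∈ ((List.range n).map (staircase S)).take (j + 1) := by
      rw [← List.map_take, List.take_range]
      exact List.mem_map_of_mem (List.mem_range.2 (by omega))
    have : staircase S j ≤ (((List.range n).map (staircase S)).take (j + 1)).foldr max 0 :=
      List.le_max_of_le hmem le_rfl
    have := staircase_succ_le S j
    rw [getD_map_range _ n hj]
    omega

theorem not_containsPat_121_staircaseWord : ¬ ContainsPat (staircaseWord n S) [1, 2, 1] :=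
  not_containsPat_121_of_monotone fun i j hij hj => by
    rw [length_staircaseWord] at hj
    rw [staircaseWord, getD_map_range _ n hj, getD_map_range _ n (by omega)]
    exact staircase_monotone S hij

theorem staircaseWord_injOn :
    Set.InjOn (staircaseWord n) (range (n - 1)).powerset := by
  intro S hS T hT h
  have hST : ∀ k < n, staircase S k = staircase T k := fun k hk => by
    rw [← getD_map_range (staircase S) n hk, ← getD_map_range (staircase T) n hk]
    exact congrArg (·.getD k 0) h
  rw [coe_powerset, Set.mem_preimage, Set.mem_powerset_iff, coe_subset] at hS hT
  ext i
  by_cases hi : i < n - 1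
  · rw [mem_iff_staircase_succ S, mem_iff_staircase_succ T, hST i (by omega),
      hST (i + 1) (by omega)]
  · exact iff_of_false (fun h => hi (mem_range.1 (hS h))) (fun h => hi (mem_range.1 (hT h)))

theorem eq_staircaseWord_of_not_containsPat_121 {w : List ℕ} (hw : IsRGF w)
    (hav : ¬ ContainsPat w [1, 2, 1]) :
    w = staircaseWord w.length {i ∈ range (w.length - 1) | w.getD (i + 1) 0 = w.getD i 0 + 1} := by
  set S := {i ∈ range (w.length - 1) | w.getD (i + 1) 0 = w.getD i 0 + 1}
  have key : ∀ j < w.length, ∀ i ≤ j, w.getD i 0 = staircase S i := by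
    intro j
    induction j with
    | zero =>
      intro h i hi
      obtain rfl : i = 0 := by omega
      rw [staircase_zero, hw.2.1 h]
    | succ j ih =>
      intro hj i hi
      replace ih := ih (by omega)
      rcases hi.lt_or_eq with hi | rfl
      · exact ih i (by omega)
      have hle : ∀ i ≤ j, w.getD i 0 ≤ w.getD j 0 := fun i hi => by
        rw [ih i hi, ih j le_rfl]
        exact staircase_monotone S hi
      have hsurj : ∀ v ∈ Icc 1 (w.getD j 0), ∃ i ≤ j, w.getD i 0 = v := by
        rw [ih j le_rfl, ← staircase_zero S, ← image_Icc_eq_Icc_of_unit_steps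
          (staircase_monotone S) (staircase_succ_le S) j.zero_le]
        simp only [mem_image, mem_Icc]
        rintro v ⟨i, ⟨-, hi⟩, rfl⟩
        exact ⟨i, hi, ih i hi⟩
      have hstep := getD_succ_of_not_containsPat_121 hw hav hj hle hsurj
      have hmem : j ∈ S ↔ w.getD (j + 1) 0 = w.getD j 0 + 1 := by
        simp only [S, mem_filter, mem_range]
        omega
      rw [staircase_succ, ← ih j le_rfl]
      split_ifs with h
      · exact hmem.1 h
      · have := mt hmem.2 h
        omega
  refine List.ext_getElem (by simp) fun i h₁ h₂ => ?_
  rw [← List.getD_eq_getElem _ 0, ← List.getD_eq_getElem _ 0, staircaseWord,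
    getD_map_range _ _ h₁]
  exact key i h₁ i le_rfl

theorem Rn_121_eq (n : ℕ) :
    Rn n [1, 2, 1] = ((range (n - 1)).powerset.image (staircaseWord n) : Set (List ℕ)) := by
  ext w
  simp only [Rn, Set.mem_ofPred_eq, coe_image, Set.mem_image, mem_coe, mem_powerset]
  constructor
  · rintro ⟨rfl, hw, hav⟩
    exact ⟨_, filter_subset _ _, (eq_staircaseWord_of_not_containsPat_121 hw hav).symm⟩
  · rintro ⟨S, -, rfl⟩
    exact ⟨length_staircaseWord, staircaseWord_isRGF, not_containsPat_121_staircaseWord⟩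

theorem finsum_mem_Rn_121 {M : Type*} [AddCommMonoid M] (n : ℕ) (F : List ℕ → M) :
    ∑ᶠ w ∈ Rn n [1, 2, 1], F w = ∑ S ∈ (range (n - 1)).powerset, F (staircaseWord n S) := by
  rw [Rn_121_eq, finsum_mem_coe_finset, sum_image staircaseWord_injOn]

end Avoiders

section GeneratingFunctions

variable {R : Type*} [CommSemiring R]

theorem sum_powerset_pow_sum {ι : Type*} (s : Finset ι) (f : ι → ℕ) (x : R) :
    ∑ t ∈ s.powerset, x ^ ∑ i ∈ t, f i = ∏ i ∈ s, (1 + x ^ f i) := by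
  simp [prod_one_add, prod_pow_eq_pow_sum]

theorem prod_range_one_add_pow_succ (x : R) (m : ℕ) :
    ∏ i ∈ range m, (1 + x ^ (i + 1)) = ∏ i ∈ Icc 1 m, (1 + x ^ i) := by
  rw [range_eq_Ico, prod_Ico_add' (fun i => 1 + x ^ i), Ico_add_one_right_eq_Icc, zero_add]

end GeneratingFunctions

theorem stmt12_general (n : ℕ) :
    LBp n [1, 2, 1] = (2 ^ (n - 1) : Polynomial ℤ) ∧
    RSp n [1, 2, 1] = (2 ^ (n - 1) : Polynomial ℤ) ∧
    LSp n [1, 2, 1] = ∏ i ∈ Finset.Icc 1 (n - 1), (1 + Polynomial.X ^ i) ∧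
    RBp n [1, 2, 1] = ∏ i ∈ Finset.Icc 1 (n - 1), (1 + Polynomial.X ^ i) := by
  refine ⟨?_, ?_, ?_, ?_⟩
  · simp [LBp, finsum_mem_Rn_121, staircaseWord_statLB]
  · simp [RSp, finsum_mem_Rn_121, staircaseWord_statRS]
  · calc LSp n [1, 2, 1]
        = ∑ S ∈ (range (n - 1)).powerset, (Polynomial.X : Polynomial ℤ) ^ ∑ i ∈ S, (n - 1 - i) := by
          simp only [LSp, finsum_mem_Rn_121, staircaseWord_statLS]
      _ = ∏ i ∈ range (n - 1), (1 + (Polynomial.X : Polynomial ℤ) ^ (n - 1 - 1 - i + 1)) := by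
          rw [sum_powerset_pow_sum]
          refine prod_congr rfl fun i hi => ?_
          rw [mem_range] at hi
          congr 2
          omega
      _ = _ := by
          rw [prod_range_reflect (fun i => 1 + (Polynomial.X : Polynomial ℤ) ^ (i + 1)), prod_range_one_add_pow_succ]
  · calc RBp n [1, 2, 1]
        = ∑ S ∈ (range (n - 1)).powerset, (Polynomial.X : Polynomial ℤ) ^ ∑ i ∈ S, (i + 1) := by
          rw [RBp, finsum_mem_Rn_121]
          exact sum_congr rfl fun S hS => by rw [staircaseWord_statRB S (mem_powerset.1 hS)]
      _ = _ := by rw [sum_powerset_pow_sum, prod_range_one_add_pow_succ]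

/-- `LB_n(13/2) = 2^{n-1} = RS_n(13/2)` (constant polynomials)
and `LS_n(13/2) = ∏_{i=1}^{n-1}(1+q^i) = RB_n(13/2)`. -/
theorem stmt12 (n : ℕ) (hn : 1 ≤ n) :
    LBp n [1, 2, 1] = (2 ^ (n - 1) : Polynomial ℤ) ∧
    RSp n [1, 2, 1] = (2 ^ (n - 1) : Polynomial ℤ) ∧
    LSp n [1, 2, 1] = ∏ i ∈ Finset.Icc 1 (n - 1), (1 + Polynomial.X ^ i) ∧
    RBp n [1, 2, 1] = ∏ i ∈ Finset.Icc 1 (n - 1), (1 + Polynomial.X ^ i) :=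
  stmt12_general n
end
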